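/- arXiv:2109.03666 — 9 statements merged into one kernel-verified Lean document; each statement's English description precedes it below -/
import Mathlib

section
/- An orientation o of the n-dimensional hypercube (a function o : P([n]) → P([n]) such that for all v and d, d ∈ o(v) iff d ∉ o(v Δ {d})) is a unique sink orientation (every face has exactly one sink) if and only if for all distinct vertices v, w, the set (v Δ w) ∩ (o(v) Δ o(w)) is nonempty. -/
open scoped symmDiff

set_option maxHeartbeats 1200000

/-- An orientation of the `n`-cube: `d ∈ o v` iff `d ∉ o (v Δ {d})`. -/
def IsOrientation (n : ℕ) (o : Finset (Fin n) → Finset (Fin n)) : Prop :=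
  ∀ (v : Finset (Fin n)) (d : Fin n), d ∈ o v ↔ d ∉ o (v ∆ {d})

private def Uso (n : ℕ) (o : Finset (Fin n) → Finset (Fin n)) : Prop :=
  ∀ (v₀ D : Finset (Fin n)), ∃! w : Finset (Fin n), w ∆ v₀ ⊆ D ∧ o w ∩ D = ∅

private lemma inter_empty_iff {n : ℕ} (s D : Finset (Fin n)) :
    s ∩ D = ∅ ↔ ∀ x, x ∈ D → x ∉ s := by
  rw [Finset.eq_empty_iff_forall_notMem]
  constructor
  · intro h x hD hs; exact h x (Finset.mem_inter.2 ⟨hs, hD⟩)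
  · intro h x hx; obtain ⟨hs, hD⟩ := Finset.mem_inter.1 hx; exact h x hD hs

private lemma mem_sd_flip {n : ℕ} {x d : Fin n} (hx : x ≠ d) (u v : Finset (Fin n)) :
    x ∈ u ∆ (v ∆ ({d} : Finset (Fin n))) ↔ x ∈ u ∆ v := by
  simp only [Finset.mem_symmDiff, Finset.mem_singleton]
  tauto

private lemma mem_sd_flip_d {n : ℕ} {d : Fin n} (u v : Finset (Fin n)) :
    d ∈ u ∆ (v ∆ ({d} : Finset (Fin n))) ↔ d ∉ u ∆ v := by
  simp only [Finset.mem_symmDiff, Finset.mem_singleton]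
  tauto

/-- Flipping a single dimension preserves the USO property. -/
private lemma flip1 {n : ℕ} {o : Finset (Fin n) → Finset (Fin n)} (d : Fin n)
    (h : Uso n o) : Uso n (fun u => o u ∆ {d}) := by
  intro v₀ D
  by_cases hd : d ∈ D
  · set D' := D.erase d with hD'
    have hD'sub : D' ⊆ D := Finset.erase_subset _ _
    have hdD' : d ∉ D' := Finset.notMem_erase _ _
    have hmemD' : ∀ x, x ∈ D → x ≠ d → x ∈ D' := fun x hx hne => Finset.mem_erase.2 ⟨hne, hx⟩
    obtain ⟨s₀, ⟨hs₀m, hs₀s⟩, hs₀u⟩ := h v₀ D'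
    obtain ⟨s₁, ⟨hs₁m, hs₁s⟩, hs₁u⟩ := h (v₀ ∆ {d}) D'
    obtain ⟨z, ⟨hzm, hzs⟩, hzu⟩ := h v₀ D
    rw [inter_empty_iff] at hs₀s hs₁s hzs
    -- s₁'s membership in face (v₀, D)
    have hs₁m' : s₁ ∆ v₀ ⊆ D := by
      intro x hx
      by_cases hxd : x = d
      · subst hxd; exact hd
      · exact hD'sub (hs₁m ((mem_sd_flip hxd s₁ v₀).2 hx))
    have hs₀m' : s₀ ∆ v₀ ⊆ D := fun x hx => hD'sub (hs₀m hx)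
    -- d not in s₀ ∆ v₀, d in s₁ ∆ v₀
    have hC : d ∉ s₀ ∆ v₀ := fun hc => hdD' (hs₀m hc)
    have hDfact : d ∈ s₁ ∆ v₀ := by
      by_contra hc
      exact hdD' (hs₁m ((mem_sd_flip_d s₁ v₀).2 hc))
    have hne01 : s₀ ≠ s₁ := by
      intro he; rw [he] at hC; exact hC hDfact
    -- Fact E
    have factE : ∀ u, u ∆ v₀ ⊆ D → (∀ x, x ∈ D' → x ∉ o u) → u = s₀ ∨ u = s₁ := by
      intro u hm hs
      by_cases hdu : d ∈ u ∆ v₀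
      · right
        refine hs₁u u ⟨?_, (inter_empty_iff _ _).2 hs⟩
        intro x hx
        by_cases hxd : x = d
        · subst hxd
          exact absurd ((mem_sd_flip_d u v₀).1 hx) (by simpa using hdu)
        · exact hmemD' x (hm ((mem_sd_flip hxd u v₀).1 hx)) hxd
      · left
        refine hs₀u u ⟨?_, (inter_empty_iff _ _).2 hs⟩
        intro x hx
        exact hmemD' x (hm hx) (fun he => hdu (he ▸ hx))
    -- z is s₀ or s₁, and d ∉ o z
    have hdz : d ∉ o z := hzs d hd
    have hz01 : z = s₀ ∨ z = s₁ := factE z hzm (fun x hx => hzs x (hD'sub hx))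
    -- if d ∉ o sᵢ then sᵢ = z
    have factG0 : d ∉ o s₀ → s₀ = z := by
      intro hds
      refine hzu s₀ ⟨hs₀m', (inter_empty_iff _ _).2 ?_⟩
      intro x hx
      by_cases hxd : x = d
      · subst hxd; exact hds
      · exact hs₀s x (hmemD' x hx hxd)
    have factG1 : d ∉ o s₁ → s₁ = z := by
      intro hds
      refine hzu s₁ ⟨hs₁m', (inter_empty_iff _ _).2 ?_⟩
      intro x hx
      by_cases hxd : x = d
      · subst hxd; exact hds
      · exact hs₁s x (hmemD' x hx hxd)
    -- exactly one of d ∈ o s₀, d ∈ o s₁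
    have hnotboth : ¬ (d ∈ o s₀ ∧ d ∈ o s₁) := by
      rintro ⟨h0, h1⟩
      rcases hz01 with rfl | rfl
      · exact hdz h0
      · exact hdz h1
    have hnotneither : ¬ (d ∉ o s₀ ∧ d ∉ o s₁) := by
      rintro ⟨h0, h1⟩
      exact hne01 ((factG0 h0).trans (factG1 h1).symm)
    -- uniqueness argument for the flipped orientation
    have key : ∀ u, u ∆ v₀ ⊆ D → (o u ∆ {d}) ∩ D = ∅ →
        (u = s₀ ∨ u = s₁) ∧ d ∈ o u := by
      intro u hm hs
      rw [inter_empty_iff] at hs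
      have hdu : d ∈ o u := by
        have := hs d hd
        simp only [Finset.mem_symmDiff, Finset.mem_singleton] at this
        tauto
      refine ⟨factE u hm ?_, hdu⟩
      intro x hx hxu
      refine hs x (hD'sub hx) ?_
      simp only [Finset.mem_symmDiff, Finset.mem_singleton]
      exact Or.inl ⟨hxu, fun he => hdD' (he ▸ hx)⟩
    by_cases h0 : d ∈ o s₀
    · have h1 : d ∉ o s₁ := fun hc => hnotboth ⟨h0, hc⟩
      refine ⟨s₀, ⟨hs₀m', ?_⟩, ?_⟩
      · rw [inter_empty_iff]
        intro x hx
        simp only [Finset.mem_symmDiff, Finset.mem_singleton]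
        by_cases hxd : x = d
        · subst hxd; tauto
        · have := hs₀s x (hmemD' x hx hxd); tauto
      · rintro u ⟨hm, hs⟩
        obtain ⟨hu01, hdu⟩ := key u hm hs
        rcases hu01 with rfl | rfl
        · rfl
        · exact absurd hdu h1
    · have h1 : d ∈ o s₁ := by
        by_contra hc; exact hnotneither ⟨h0, hc⟩
      refine ⟨s₁, ⟨hs₁m', ?_⟩, ?_⟩
      · rw [inter_empty_iff]
        intro x hx
        simp only [Finset.mem_symmDiff, Finset.mem_singleton]
        by_cases hxd : x = d
        · subst hxd; tauto
        · have := hs₁s x (hmemD' x hx hxd); tauto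
      · rintro u ⟨hm, hs⟩
        obtain ⟨hu01, hdu⟩ := key u hm hs
        rcases hu01 with rfl | rfl
        · exact absurd hdu h0
        · rfl
  · -- d ∉ D : sinks are unchanged
    have heq : ∀ u : Finset (Fin n), (o u ∆ {d}) ∩ D = o u ∩ D := by
      intro u
      ext x
      simp only [Finset.mem_inter, Finset.mem_symmDiff, Finset.mem_singleton]
      constructor
      · rintro ⟨h1, h2⟩
        refine ⟨?_, h2⟩
        rcases h1 with ⟨h, _⟩ | ⟨h, _⟩
        · exact h
        · exact absurd h2 (h ▸ hd)
      · rintro ⟨h1, h2⟩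
        exact ⟨Or.inl ⟨h1, fun he => hd (he ▸ h2)⟩, h2⟩
    obtain ⟨w, ⟨hwm, hws⟩, hwu⟩ := h v₀ D
    refine ⟨w, ⟨hwm, ?_⟩, ?_⟩
    · show (o w ∆ {d}) ∩ D = ∅
      rw [heq w]; exact hws
    · rintro u ⟨hm, hs⟩
      refine hwu u ⟨hm, ?_⟩
      rw [← heq u]; exact hs

/-- Flipping any set of dimensions preserves the USO property. -/
private lemma flipA {n : ℕ} {o : Finset (Fin n) → Finset (Fin n)} (A : Finset (Fin n))
    (h : Uso n o) : Uso n (fun u => o u ∆ A) := by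
  induction A using Finset.induction_on with
  | empty =>
      have he : (fun u => o u ∆ (∅ : Finset (Fin n))) = o := by
        funext u; ext x; simp [Finset.mem_symmDiff]
      rw [he]; exact h
  | @insert a s ha ih =>
      have : (fun u => o u ∆ insert a s) = (fun u => (o u ∆ s) ∆ {a}) := by
        funext u
        ext x
        simp only [Finset.mem_symmDiff, Finset.mem_insert, Finset.mem_singleton]
        by_cases hx : x = a <;> simp [hx] <;> tauto
      rw [this]
      exact flip1 a ih

/-- An orientation is a USO (every face, given by a base vertex `v₀` and spanning
dimension set `D`, has exactly one sink) iff the Szábo-Welzl condition holds. -/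
theorem stmt0 (n : ℕ) (o : Finset (Fin n) → Finset (Fin n)) (ho : IsOrientation n o) :
    (∀ (v₀ D : Finset (Fin n)), ∃! w : Finset (Fin n), w ∆ v₀ ⊆ D ∧ o w ∩ D = ∅) ↔
    (∀ v w : Finset (Fin n), v ≠ w → ((v ∆ w) ∩ (o v ∆ o w)).Nonempty) := by
  constructor
  · -- USO → SW
    intro hU v w hvw
    by_contra hne
    rw [Finset.not_nonempty_iff_eq_empty, inter_empty_iff] at hne
    set D := v ∆ w with hD
    have hsame : ∀ x, x ∈ D → (x ∈ o v ↔ x ∈ o w) := by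
      intro x hx
      have := hne x
      simp only [Finset.mem_symmDiff] at this ⊢
      tauto
    set A := o v ∩ D with hA
    have hUso : Uso n (fun u => o u ∆ A) := flipA A hU
    obtain ⟨z, _, hzu⟩ := hUso v D
    have hvz : v = z := by
      refine hzu v ⟨by simp, ?_⟩
      rw [inter_empty_iff]
      intro x hx
      simp only [Finset.mem_symmDiff, hA, Finset.mem_inter]
      tauto
    have hwz : w = z := by
      refine hzu w ⟨by rw [symmDiff_comm], ?_⟩
      rw [inter_empty_iff]
      intro x hx
      have := hsame x hx
      simp only [Finset.mem_symmDiff, hA, Finset.mem_inter]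
      tauto
    exact hvw (hvz.trans hwz.symm)
  · -- SW → USO
    intro hsw v₀ D
    -- uniqueness
    have huniq : ∀ w w' : Finset (Fin n), w ∆ v₀ ⊆ D → o w ∩ D = ∅ →
        w' ∆ v₀ ⊆ D → o w' ∩ D = ∅ → w = w' := by
      intro w w' hm hs hm' hs'
      by_contra hne
      obtain ⟨e, he⟩ := hsw w w' hne
      rw [Finset.mem_inter] at he
      obtain ⟨he1, he2⟩ := he
      have heD : e ∈ D := by
        simp only [Finset.mem_symmDiff] at he1
        rcases he1 with ⟨h1, h2⟩ | ⟨h1, h2⟩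
        · by_cases hv : e ∈ v₀
          · exact hm' (Finset.mem_symmDiff.2 (Or.inr ⟨hv, h2⟩))
          · exact hm (Finset.mem_symmDiff.2 (Or.inl ⟨h1, hv⟩))
        · by_cases hv : e ∈ v₀
          · exact hm (Finset.mem_symmDiff.2 (Or.inr ⟨hv, h2⟩))
          · exact hm' (Finset.mem_symmDiff.2 (Or.inl ⟨h1, hv⟩))
      rw [inter_empty_iff] at hs hs'
      simp only [Finset.mem_symmDiff] at he2
      rcases he2 with ⟨h1, _⟩ | ⟨h1, _⟩
      · exact hs e heD h1
      · exact hs' e heD h1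
    -- existence by induction on D
    have hex : ∀ (D v₀ : Finset (Fin n)), ∃ w, w ∆ v₀ ⊆ D ∧ o w ∩ D = ∅ := by
      intro D
      induction D using Finset.induction_on with
      | empty =>
          intro v₀
          exact ⟨v₀, by simp, by simp⟩
      | @insert d D' hd ih =>
          intro v₀
          obtain ⟨w₁, hw₁m, hw₁s⟩ := ih v₀
          obtain ⟨w₂, hw₂m, hw₂s⟩ := ih (v₀ ∆ {d})
          rw [inter_empty_iff] at hw₁s hw₂s
          have hsubD : D' ⊆ insert d D' := Finset.subset_insert _ _
          by_cases h1 : d ∈ o w₁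
          · by_cases h2 : d ∈ o w₂
            · -- contradiction
              exfalso
              have hne : w₁ ≠ w₂ := by
                intro he
                have hd1 : d ∉ w₁ ∆ v₀ := fun hc => hd (hw₁m hc)
                have hd2 : d ∈ w₂ ∆ v₀ := by
                  by_contra hc
                  exact hd (hw₂m ((mem_sd_flip_d w₂ v₀).2 hc))
                rw [he] at hd1
                exact hd1 hd2
              obtain ⟨e, he⟩ := hsw w₁ w₂ hne
              rw [Finset.mem_inter] at he
              obtain ⟨he1, he2⟩ := he
              have hed : e ≠ d := by
                intro hc
                subst hc
                simp only [Finset.mem_symmDiff] at he2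
                tauto
              have heD' : e ∈ D' := by
                simp only [Finset.mem_symmDiff] at he1
                have hw₂m' : ∀ x, x ≠ d → x ∈ w₂ ∆ v₀ → x ∈ D' :=
                  fun x hx hm => hw₂m ((mem_sd_flip hx w₂ v₀).2 hm)
                rcases he1 with ⟨ha, hb⟩ | ⟨ha, hb⟩
                · by_cases hv : e ∈ v₀
                  · exact hw₂m' e hed (Finset.mem_symmDiff.2 (Or.inr ⟨hv, hb⟩))
                  · exact hw₁m (Finset.mem_symmDiff.2 (Or.inl ⟨ha, hv⟩))
                · by_cases hv : e ∈ v₀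
                  · exact hw₁m (Finset.mem_symmDiff.2 (Or.inr ⟨hv, hb⟩))
                  · exact hw₂m' e hed (Finset.mem_symmDiff.2 (Or.inl ⟨ha, hv⟩))
              simp only [Finset.mem_symmDiff] at he2
              rcases he2 with ⟨ha, _⟩ | ⟨ha, _⟩
              · exact hw₁s e heD' ha
              · exact hw₂s e heD' ha
            · -- w₂ works
              refine ⟨w₂, ?_, ?_⟩
              · intro x hx
                by_cases hxd : x = d
                · subst hxd; exact Finset.mem_insert_self _ _
                · exact hsubD (hw₂m ((mem_sd_flip hxd w₂ v₀).2 hx))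
              · rw [inter_empty_iff]
                intro x hx hxo
                rcases Finset.mem_insert.1 hx with rfl | hxD'
                · exact h2 hxo
                · exact hw₂s x hxD' hxo
          · -- w₁ works
            refine ⟨w₁, fun x hx => hsubD (hw₁m hx), ?_⟩
            rw [inter_empty_iff]
            intro x hx hxo
            rcases Finset.mem_insert.1 hx with rfl | hxD'
            · exact h1 hxo
            · exact hw₁s x hxD' hxo
    obtain ⟨w, hw1, hw2⟩ := hex D v₀
    exact ⟨w, ⟨hw1, hw2⟩, fun u ⟨hu1, hu2⟩ => huniq u w hu1 hu2 hw1 hw2⟩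
end

section
/- Let G = ([n], E) be a directed graph containing all loops (d,d) and no other directed cycles. Then there is a unique orientation m of the n-cube with m(∅) = ∅ such that for all d, d' ∈ [n] and all vertices v, the membership d' ∈ m(v) differs from d' ∈ m(v Δ {d}) if and only if (d,d') ∈ E. -/
open scoped symmDiff

/-- The graph `E` has no directed cycle apart from loops. -/
def NoNonloopCycle (n : ℕ) (E : Fin n → Fin n → Prop) : Prop :=
  ∀ d : Fin n, ¬ Relation.TransGen (fun a b => E a b ∧ a ≠ b) d d

/-
Walking from `∅` to `v` one coordinate at a time, the flip condition toggles `d' ∈ m(·)` once for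
every `d ∈ v` with `(d, d') ∈ E`; since `m ∅ = ∅`, this forces `d' ∈ m v` iff that number is odd.
Conversely this parity map satisfies the flip condition, and the loops `(d, d) ∈ E` make it an
orientation.
-/

theorem Finset.sum_symmDiff_of_charTwo {ι R : Type*} [DecidableEq ι] [Semiring R] [CharP R 2]
    (s t : Finset ι) (f : ι → R) :
    ∑ x ∈ s ∆ t, f x = ∑ x ∈ s, f x + ∑ x ∈ t, f x := by
  have hsplit : s ∆ t ∪ s ∩ t = s ∪ t := symmDiff_sup_inf s t
  have hdisj : Disjoint (s ∆ t) (s ∩ t) := disjoint_symmDiff_inf s t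
  rw [← Finset.sum_union_inter, ← hsplit, Finset.sum_union hdisj, add_assoc,
    CharTwo.add_self_eq_zero, add_zero]

section Matousek

variable {α : Type*} (E : α → α → Prop) [DecidableRel E]

def edgeParity (v : Finset α) (d' : α) : ZMod 2 :=
  ∑ d ∈ v, if E d d' then 1 else 0

lemma edgeParity_symmDiff_singleton [DecidableEq α] (v : Finset α) (d d' : α) :
    edgeParity E (v ∆ {d}) d' = edgeParity E v d' + if E d d' then 1 else 0 := by
  rw [edgeParity, Finset.sum_symmDiff_of_charTwo, Finset.sum_singleton, edgeParity]

variable [Fintype α]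

def matousekMap (v : Finset α) : Finset α :=
  {d' | edgeParity E v d' = 1}

lemma matousekMap_empty : matousekMap E ∅ = ∅ := by
  simp [matousekMap, edgeParity]

lemma xor_mem_matousekMap_symmDiff_singleton [DecidableEq α] (d d' : α) (v : Finset α) :
    Xor (d' ∈ matousekMap E v) (d' ∈ matousekMap E (v ∆ {d})) ↔ E d d' := by
  have hflip : ∀ p b : ZMod 2, Xor (p = 1) (p + b = 1) ↔ b = 1 := by decide
  simp only [matousekMap, Finset.mem_filter, Finset.mem_univ, true_and,
    edgeParity_symmDiff_singleton, hflip]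
  split_ifs with h <;> simp [h]

end Matousek

lemma eq_of_xor_mem_symmDiff_singleton_iff {α : Type*} [DecidableEq α] {E : α → α → Prop}
    {m m' : Finset α → Finset α} (hempty : m ∅ = m' ∅)
    (hm : ∀ d d' v, Xor (d' ∈ m v) (d' ∈ m (v ∆ {d})) ↔ E d d')
    (hm' : ∀ d d' v, Xor (d' ∈ m' v) (d' ∈ m' (v ∆ {d})) ↔ E d d') :
    m = m' := by
  funext v
  induction v using Finset.induction_on with
  | empty => exact hempty
  | insert d v hd ih =>
    have hins : v ∆ {d} = insert d v := by
      ext; simp only [Finset.mem_symmDiff, Finset.mem_singleton, Finset.mem_insert]; grind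
    ext d'
    have h := (hm d d' v).trans (hm' d d' v).symm
    rw [hins, ih] at h
    simp only [xor_iff_not_iff] at h
    tauto

lemma isOrientation_of_xor_mem_symmDiff_singleton_iff {n : ℕ} {E : Fin n → Fin n → Prop}
    (hloops : ∀ d, E d d) {m : Finset (Fin n) → Finset (Fin n)}
    (hm : ∀ d d' v, Xor (d' ∈ m v) (d' ∈ m (v ∆ {d})) ↔ E d d') :
    IsOrientation n m := fun v d => xor_iff_iff_not.mp ((hm d d v).mpr (hloops d))

theorem stmt2_general (n : ℕ) (E : Fin n → Fin n → Prop)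
    (hloops : ∀ d, E d d) :
    ∃! m : Finset (Fin n) → Finset (Fin n),
      IsOrientation n m ∧ m ∅ = ∅ ∧
      ∀ (d d' : Fin n) (v : Finset (Fin n)),
        (Xor' (d' ∈ m v) (d' ∈ m (v ∆ {d})) ↔ E d d') := by
  classical
  have hxor := xor_mem_matousekMap_symmDiff_singleton E
  refine ⟨matousekMap E, ⟨isOrientation_of_xor_mem_symmDiff_singleton_iff hloops hxor,
    matousekMap_empty E, hxor⟩, ?_⟩
  rintro m ⟨-, hempty, hm⟩
  exact eq_of_xor_mem_symmDiff_singleton_iff (hempty.trans (matousekMap_empty E).symm) hm hxor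

/-- For a graph with all loops and no other cycles, there is a unique orientation `m`
with `m ∅ = ∅` such that walking along a `d`-edge changes the outmap in coordinate `d'`
iff `(d, d')` is an edge: the Matoušek USO of the graph. -/
theorem stmt2 (n : ℕ) (E : Fin n → Fin n → Prop)
    (hloops : ∀ d, E d d) (hacyc : NoNonloopCycle n E) :
    ∃! m : Finset (Fin n) → Finset (Fin n),
      IsOrientation n m ∧ m ∅ = ∅ ∧
      ∀ (d d' : Fin n) (v : Finset (Fin n)),
        (Xor' (d' ∈ m v) (d' ∈ m (v ∆ {d})) ↔ E d d') :=
  stmt2_general n E hloops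
end

section
/- Let G = ([n], E) be a directed graph containing all loops (d,d) and no other directed cycles, and let m be the Matoušek orientation determined by G. Then m is a unique sink orientation: for all distinct v, w ∈ P([n]), (v Δ w) ∩ (m(v) Δ m(w)) ≠ ∅. -/
set_option maxHeartbeats 1000000


open scoped symmDiff

/-- The Matoušek orientation determined by a graph with all loops and no other cycles
satisfies the Szábo-Welzl condition, i.e., is a unique sink orientation. -/
theorem stmt3 (n : ℕ) (E : Fin n → Fin n → Prop)
    (hloops : ∀ d, E d d) (hacyc : NoNonloopCycle n E)
    (m : Finset (Fin n) → Finset (Fin n))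
    (hor : IsOrientation n m) (h0 : m ∅ = ∅)
    (hmat : ∀ (d d' : Fin n) (v : Finset (Fin n)),
      (Xor' (d' ∈ m v) (d' ∈ m (v ∆ {d})) ↔ E d d')) :
    ∀ v w : Finset (Fin n), v ≠ w → ((v ∆ w) ∩ (m v ∆ m w)).Nonempty := by
  classical
  have parity : ∀ (k : ℕ) (v w : Finset (Fin n)), (v ∆ w).card = k → ∀ d' : Fin n,
      ((d' ∈ m v ↔ d' ∈ m w) ↔ Even (((v ∆ w).filter (fun d => E d d')).card)) := by
    intro k
    induction k with
    | zero =>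
      intro v w hvw d'
      have hv : v = w := by
        have h := Finset.card_eq_zero.mp hvw
        rw [← Finset.bot_eq_empty] at h
        exact symmDiff_eq_bot.mp h
      subst hv
      simp
    | succ k ih =>
      intro v w hvw d'
      obtain ⟨d, hd⟩ : (v ∆ w).Nonempty := by
        rw [← Finset.card_pos, hvw]; omega
      set w' := w ∆ {d} with hw'
      have hww : w' ∆ {d} = w := symmDiff_symmDiff_cancel_right {d} w
      have hvw'e : v ∆ w' = (v ∆ w).erase d := by
        ext x
        simp only [Finset.mem_symmDiff, Finset.mem_erase, Finset.mem_singleton, hw']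
        have hdm := Finset.mem_symmDiff.mp hd
        by_cases hx : x = d <;> subst_vars <;> tauto
      have hcard : (v ∆ w').card = k := by
        rw [hvw'e, Finset.card_erase_of_mem hd, hvw]
        omega
      have hins : v ∆ w = insert d (v ∆ w') := by
        rw [hvw'e, Finset.insert_erase hd]
      have hdn : d ∉ v ∆ w' := by rw [hvw'e]; exact Finset.notMem_erase _ _
      have hx := (hmat d d' w').mpr
      have hx' := (hmat d d' w').mp
      rw [hww] at hx hx'
      have ihv := ih v w' hcard d'
      by_cases hE : E d d'
      · have hxor := hx hE
        rw [hins, Finset.filter_insert, if_pos hE, Finset.card_insert_of_notMem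
          (by simp [hdn]), Nat.even_add_one]
        rcases hxor with ⟨h1, h2⟩ | ⟨h1, h2⟩ <;> tauto
      · have hiff : (d' ∈ m w') ↔ (d' ∈ m w) := by
          by_contra hc
          exact hE (hx' ((xor_iff_not_iff _ _).mpr hc))
        rw [hins, Finset.filter_insert, if_neg hE]
        tauto
  intro v w hvw
  by_contra hcon
  rw [Finset.not_nonempty_iff_eq_empty] at hcon
  set S := v ∆ w with hS
  have hSne : S.Nonempty := by
    rw [Finset.nonempty_iff_ne_empty]
    intro h
    have h2 : v ∆ w = ⊥ := by rw [← hS]; exact h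
    exact hvw (symmDiff_eq_bot.mp h2)
  have hiff : ∀ d' ∈ S, (d' ∈ m v ↔ d' ∈ m w) := by
    intro d' hd'
    have : d' ∉ m v ∆ m w := by
      intro h
      have : d' ∈ (v ∆ w) ∩ (m v ∆ m w) := Finset.mem_inter.mpr ⟨hd', h⟩
      rw [hcon] at this; exact absurd this (Finset.notMem_empty _)
    rw [Finset.mem_symmDiff] at this
    tauto
  have hpred : ∀ d' ∈ S, ∃ d ∈ S, E d d' ∧ d ≠ d' := by
    intro d' hd'
    have heven : Even ((S.filter (fun d => E d d')).card) :=
      (parity S.card v w rfl d').mp (hiff d' hd')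
    have hmem : d' ∈ S.filter (fun d => E d d') := by
      simp [hd', hloops d']
    have hlt : 1 < (S.filter (fun d => E d d')).card := by
      have h1 : 0 < (S.filter (fun d => E d d')).card := Finset.card_pos.mpr ⟨d', hmem⟩
      rcases heven with ⟨c, hc⟩
      omega
    obtain ⟨a, ha, b, hb, hab⟩ := Finset.one_lt_card.mp hlt
    rcases Classical.em (a = d') with h | h
    · subst h
      exact ⟨b, (Finset.mem_filter.mp hb).1, (Finset.mem_filter.mp hb).2, fun h => hab h.symm⟩
    · exact ⟨a, (Finset.mem_filter.mp ha).1, (Finset.mem_filter.mp ha).2, h⟩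
  -- choose predecessor function
  choose! f hfS hfE hfne using hpred
  obtain ⟨x, hx⟩ := hSne
  have hiter : ∀ k, f^[k] x ∈ S := by
    intro k
    induction k with
    | zero => exact hx
    | succ k ih => rw [Function.iterate_succ_apply']; exact hfS _ ih
  set R : Fin n → Fin n → Prop := fun a b => E a b ∧ a ≠ b with hR
  have htg : ∀ k, ∀ i, Relation.TransGen R (f^[i + (k+1)] x) (f^[i] x) := by
    intro k
    induction k with
    | zero =>
      intro i
      have : f^[i + 1] x = f (f^[i] x) := Function.iterate_succ_apply' f i x
      rw [this]
      exact Relation.TransGen.single ⟨hfE _ (hiter i), hfne _ (hiter i)⟩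
    | succ k ih =>
      intro i
      have h1 : i + (k+2) = (i + (k+1)) + 1 := by omega
      rw [h1, Function.iterate_succ_apply' f (i + (k+1)) x]
      exact Relation.TransGen.head ⟨hfE _ (hiter _), hfne _ (hiter _)⟩ (ih i)
  obtain ⟨i, j, hij, heq⟩ := Finite.exists_ne_map_eq_of_infinite (fun k : ℕ => f^[k] x)
  rcases Nat.lt_or_ge i j with h | h
  · have := htg (j - i - 1) i
    have hji : i + (j - i - 1 + 1) = j := by omega
    rw [hji, heq] at this
    exact hacyc _ this
  · have hji : j < i := by omega
    have := htg (i - j - 1) j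
    have hij' : j + (i - j - 1 + 1) = i := by omega
    rw [hij', ← heq] at this
    exact hacyc _ this
end

section
/- For every branching (directed forest with edges oriented away from roots) B on vertex set [n], there exists a permutation π of [2n] satisfying the nesting condition (for every e with π(e) < π(ē) and every f, π(f) ∈ [π(e), π(ē)] iff π(f̄) ∈ [π(e), π(ē)], where ī = i+n) such that the containment graph G_π (with (i,j) an edge iff the interval of {π(j), π(j+n)} is strictly contained in that of {π(i), π(i+n)}) equals the transitive closure of B. -/
/-- The complementary element: `ī = i + n` modulo `2n`. -/
def bar (n : ℕ) (e : Fin (2 * n)) : Fin (2 * n) :=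
  ⟨(e.val + n) % (2 * n), Nat.mod_lt _ (by have := e.isLt; omega)⟩

/-- The nesting condition on the permutation `π`. -/
def Nested (n : ℕ) (π : Equiv.Perm (Fin (2 * n))) : Prop :=
  ∀ e f : Fin (2 * n), π e < π (bar n e) →
    ((π e ≤ π f ∧ π f ≤ π (bar n e)) ↔ (π e ≤ π (bar n f) ∧ π (bar n f) ≤ π (bar n e)))

def emb (n : ℕ) (i : Fin n) : Fin (2 * n) := Fin.castLE (by omega) i

def lo (n : ℕ) (π : Equiv.Perm (Fin (2 * n))) (i : Fin n) : Fin (2 * n) :=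
  min (π (emb n i)) (π (bar n (emb n i)))

def hi (n : ℕ) (π : Equiv.Perm (Fin (2 * n))) (i : Fin n) : Fin (2 * n) :=
  max (π (emb n i)) (π (bar n (emb n i)))

/-- The loopless containment graph `G_π`. -/
def Gpi (n : ℕ) (π : Equiv.Perm (Fin (2 * n))) (i j : Fin n) : Prop :=
  i ≠ j ∧ lo n π i < lo n π j ∧ hi n π j < hi n π i

/-- A branching: a directed forest with all in-degrees at most one and no cycles. -/
def IsBranching {α : Type*} (B : α → α → Prop) : Prop :=
  (∀ u v w, B u w → B v w → u = v) ∧ (∀ v, ¬ Relation.TransGen B v v)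

/-
Record a depth-first traversal of the forest as a word in the 2n tokens, writing `v` on entering
vertex `v` and `v̄ = v + n` on leaving it, and let `π` send each token to its position in that
word. The stretch of the word between `v` and `v̄` is the traversal of the subtree at `v`, so the
interval `[π v, π v̄]` contains exactly the tokens `u, ū` of the descendants `u` of `v`. This set
is closed under `u ↦ ū`, which is the nesting condition, and the interval of `u` lies strictly
inside that of `v` exactly when `u` is a proper descendant of `v`.
-/

open Relation

theorem List.infix_flatMap {α β : Type*} {l : List α} {a : α} (h : a ∈ l) (f : α → List β) :
    f a <:+: l.flatMap f :=
  List.flatMap_def .. ▸ List.infix_of_mem_flatten (List.mem_map_of_mem h)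

theorem List.Nodup.idxOf_mem_Icc_iff_mem_of_infix {β : Type*} [DecidableEq β] {L l : List β}
    {a b x : β} (hL : L.Nodup) (hl : a :: l ++ [b] <:+: L) (hx : x ∈ L) :
    L.idxOf x ∈ Set.Icc (L.idxOf a) (L.idxOf b) ↔ x ∈ a :: l ++ [b] := by
  obtain ⟨P, S, rfl⟩ := hl
  have hPW := List.disjoint_of_nodup_append (List.nodup_append.mp hL).1
  have hPWS := List.disjoint_of_nodup_append hL
  have hW := (List.nodup_append.mp (List.nodup_append.mp hL).1).2.1
  have hidx : ∀ y ∈ a :: l ++ [b],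
      (P ++ (a :: l ++ [b]) ++ S).idxOf y = P.length + (a :: l ++ [b]).idxOf y := fun y hy => by
    rw [List.append_assoc, List.idxOf_append_of_notMem (fun h => hPW h hy),
      List.idxOf_append_of_mem hy]
  have hb : (a :: l ++ [b]).idxOf b = l.length + 1 := by
    have : b ∉ a :: l := fun h => (List.nodup_append.mp hW).2.2 b h b (by simp) rfl
    rw [List.idxOf_append_of_notMem this]; simp
  have ha : (a :: l ++ [b]).idxOf a = 0 := by simp
  rw [Set.mem_Icc, hidx a (by simp), hidx b (by simp), ha, hb]
  rcases List.mem_append.mp hx with hx | hx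
  · rcases List.mem_append.mp hx with hx | hx
    · have := List.idxOf_lt_length_of_mem hx
      rw [List.append_assoc, List.idxOf_append_of_mem hx]
      have hxW : x ∉ a :: l ++ [b] := fun h => hPW hx h
      simp only [hxW, iff_false]; omega
    · have := List.idxOf_lt_length_of_mem hx
      simp only [List.length_append, List.length_cons, List.length_nil] at this
      simp only [hidx x hx, hx, iff_true]; omega
  · have hxW : x ∉ a :: l ++ [b] := fun h => hPWS (List.mem_append_right P h) hx
    rw [List.idxOf_append_of_notMem (fun h => hPWS h hx)]
    simp only [hxW, iff_false, List.length_append, List.length_cons, List.length_nil]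
    omega

theorem List.Nodup.exists_perm_val_eq_idxOf {m : ℕ} {L : List (Fin m)} (hL : L.Nodup)
    (hmem : ∀ x, x ∈ L) : ∃ π : Equiv.Perm (Fin m), ∀ x, (π x : ℕ) = L.idxOf x := by
  let e := hL.getEquivOfForallMemList L hmem
  have hlen : L.length = m := by simpa using Fintype.card_congr e
  exact ⟨e.symm.trans (finCongr hlen), fun x => by simp [e]⟩

theorem wellFounded_of_finite_of_irrefl_transGen {α : Type*} [Finite α] {r : α → α → Prop}
    (h : ∀ a, ¬ TransGen r a a) : WellFounded r :=
  haveI : Std.Irrefl (TransGen r) := ⟨h⟩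
  Subrelation.wf TransGen.single (Finite.wellFounded_of_trans_of_irrefl (TransGen r))

theorem Relation.ReflTransGen.eq_of_forall_not_rel {α : Type*} {B : α → α → Prop} {u r : α}
    (h : ReflTransGen B u r) (hr : ∀ p, ¬ B p r) : u = r := by
  rcases h.cases_tail with rfl | ⟨p, _, hpr⟩
  · rfl
  · exact (hr p hpr).elim

namespace IsBranching

variable {α : Type*} {B : α → α → Prop}

theorem wellFounded [Finite α] (hB : IsBranching B) : WellFounded B :=
  wellFounded_of_finite_of_irrefl_transGen hB.2

theorem wellFounded_swap [Finite α] (hB : IsBranching B) : WellFounded (Function.swap B) :=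
  wellFounded_of_finite_of_irrefl_transGen fun v h => hB.2 v (transGen_swap.mp h)

theorem reflTransGen_of_transGen_of_rel (hB : IsBranching B) {u p w : α}
    (huw : TransGen B u w) (hpw : B p w) : ReflTransGen B u p := by
  obtain ⟨c, huc, hcw⟩ := TransGen.tail'_iff.mp huw
  rwa [hB.1 p c w hpw hcw]

theorem reflTransGen_total_of_common (hB : IsBranching B) {u v x : α}
    (hu : ReflTransGen B u x) (hv : ReflTransGen B v x) :
    ReflTransGen B u v ∨ ReflTransGen B v u := by
  induction hv using ReflTransGen.head_induction_on with
  | refl => exact Or.inl hu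
  | @head v c hvc _ ih =>
    rcases ih with h | h
    · rcases reflTransGen_iff_eq_or_transGen.mp h with rfl | h
      · exact Or.inr (ReflTransGen.single hvc)
      · exact Or.inl (hB.reflTransGen_of_transGen_of_rel h hvc)
    · exact Or.inr (ReflTransGen.head hvc h)

theorem eq_of_rel_of_rel_of_reflTransGen (hB : IsBranching B) {p w₁ w₂ : α}
    (h₁ : B p w₁) (h₂ : B p w₂) (h : ReflTransGen B w₁ w₂) : w₁ = w₂ := by
  rcases reflTransGen_iff_eq_or_transGen.mp h with h | h
  · exact h.symm
  · exact (hB.2 p (TransGen.head' h₁ (hB.reflTransGen_of_transGen_of_rel h h₂))).elim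

theorem exists_root_reflTransGen [Finite α] (hB : IsBranching B) (v : α) :
    ∃ r, (∀ p, ¬ B p r) ∧ ReflTransGen B r v := by
  induction v using hB.wellFounded.induction with
  | _ v ih =>
    by_cases hv : ∃ p, B p v
    · obtain ⟨p, hpv⟩ := hv
      obtain ⟨r, hr, hrp⟩ := ih p hpv
      exact ⟨r, hr, hrp.tail hpv⟩
    · exact ⟨v, not_exists.mp hv, .refl⟩

end IsBranching

section Tour

variable {α : Type*} [Fintype α] {B : α → α → Prop}

namespace IsBranching

open Classical in
noncomputable def children (B : α → α → Prop) (v : α) : List α :=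
  (Finset.univ.filter (B v ·)).toList

theorem mem_children {v w : α} : w ∈ children B v ↔ B v w := by
  simp [children]

theorem nodup_children (v : α) : (children B v).Nodup :=
  Finset.nodup_toList _

open Classical in
noncomputable def roots (B : α → α → Prop) : List α :=
  (Finset.univ.filter fun v => ∀ p, ¬ B p v).toList

theorem mem_roots {v : α} : v ∈ roots B ↔ ∀ p, ¬ B p v := by
  simp [roots]

theorem nodup_roots : (roots B).Nodup :=
  Finset.nodup_toList _

noncomputable def subtreeTour (hB : IsBranching B) : α → List (α ⊕ α) :=
  hB.wellFounded_swap.fix fun v ih =>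
    .inl v :: ((children B v).attach.flatMap fun w => ih w.1 ((mem_children (B := B)).mp w.2)) ++
      [.inr v]

variable (hB : IsBranching B)

theorem subtreeTour_eq (v : α) :
    hB.subtreeTour v = .inl v :: (children B v).flatMap hB.subtreeTour ++ [.inr v] := by
  rw [subtreeTour, WellFounded.fix_eq]
  simp only [List.flatMap_subtype, List.unattach_attach]

theorem mem_subtreeTour (v : α) (y : α ⊕ α) :
    y ∈ hB.subtreeTour v ↔ ReflTransGen B v (Sum.elim id id y) := by
  induction v using hB.wellFounded_swap.induction with
  | _ v ih =>
    rw [subtreeTour_eq]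
    simp only [List.mem_append, List.mem_cons, List.mem_flatMap, mem_children,
      List.not_mem_nil, or_false]
    constructor
    · rintro ((rfl | ⟨w, hvw, hy⟩) | rfl)
      · exact .refl
      · exact .head hvw ((ih w hvw).mp hy)
      · exact .refl
    · intro h
      rcases h.cases_head with h | ⟨w, hvw, hwy⟩
      · cases y <;> simp_all
      · exact Or.inl (Or.inr ⟨w, hvw, (ih w hvw).mpr hwy⟩)

theorem nodup_subtreeTour (v : α) : (hB.subtreeTour v).Nodup := by
  induction v using hB.wellFounded_swap.induction with
  | _ v ih =>
    have hsub : ∀ w ∈ children B v, ∀ u, ReflTransGen B w u → u ≠ v := by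
      rintro w hw u hwu rfl
      exact hB.2 u (TransGen.head' (mem_children.mp hw) hwu)
    have hdisj : (children B v).Pairwise fun w₁ w₂ =>
        (hB.subtreeTour w₁).Disjoint (hB.subtreeTour w₂) := by
      refine (nodup_children v).imp_of_mem fun hw₁ hw₂ hne y hy₁ hy₂ => hne ?_
      rw [mem_subtreeTour] at hy₁ hy₂
      rcases hB.reflTransGen_total_of_common hy₁ hy₂ with h | h
      · exact hB.eq_of_rel_of_rel_of_reflTransGen
          (mem_children.mp hw₁) (mem_children.mp hw₂) h
      · exact (hB.eq_of_rel_of_rel_of_reflTransGen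
          (mem_children.mp hw₂) (mem_children.mp hw₁) h).symm
    rw [subtreeTour_eq]
    simp only [List.nodup_append, List.nodup_cons, List.mem_flatMap, List.nodup_flatMap,
      List.mem_cons, List.not_mem_nil, or_false]
    refine ⟨⟨?_, fun w hw => ih w ((mem_children (B := B)).mp hw), hdisj⟩, by simp, ?_⟩
    · rintro ⟨w, hw, hvw⟩
      exact hsub w hw v ((hB.mem_subtreeTour w _).mp hvw) rfl
    · rintro y (rfl | ⟨w, hw, hyw⟩) _ rfl
      · exact Sum.inl_ne_inr
      · rintro rfl
        exact hsub w hw v ((hB.mem_subtreeTour w _).mp hyw) rfl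

theorem subtreeTour_infix {v w : α} (h : ReflTransGen B v w) :
    hB.subtreeTour w <:+: hB.subtreeTour v := by
  induction h with
  | refl => exact List.infix_refl _
  | @tail c w _ hcw ih =>
    refine List.IsInfix.trans ?_ ih
    rw [hB.subtreeTour_eq c]
    exact (List.infix_flatMap (mem_children.mpr hcw) _).trans
      ⟨[.inl c], [.inr c], by simp⟩

noncomputable def tour (hB : IsBranching B) : List (α ⊕ α) :=
  (roots B).flatMap hB.subtreeTour

theorem subtreeTour_infix_tour (v : α) : hB.subtreeTour v <:+: hB.tour := by
  obtain ⟨r, hr, hrv⟩ := hB.exists_root_reflTransGen v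
  exact (hB.subtreeTour_infix hrv).trans (List.infix_flatMap (mem_roots.mpr hr) _)

theorem mem_tour (y : α ⊕ α) : y ∈ hB.tour :=
  (hB.subtreeTour_infix_tour (Sum.elim id id y)).subset ((hB.mem_subtreeTour _ y).mpr .refl)

theorem nodup_tour : hB.tour.Nodup := by
  refine List.nodup_flatMap.mpr ⟨fun r _ => hB.nodup_subtreeTour r, ?_⟩
  refine (nodup_roots (B := B)).imp_of_mem fun hr₁ hr₂ hne y hy₁ hy₂ => hne ?_
  rw [mem_subtreeTour] at hy₁ hy₂
  rcases hB.reflTransGen_total_of_common hy₁ hy₂ with h | h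
  · exact h.eq_of_forall_not_rel (mem_roots.mp hr₂)
  · exact (h.eq_of_forall_not_rel (mem_roots.mp hr₁)).symm

end IsBranching
end Tour

def vertexOf (n : ℕ) (x : Fin (2 * n)) : Fin n :=
  ⟨x % n, Nat.mod_lt _ (by have := x.isLt; omega)⟩

theorem vertexOf_emb {n : ℕ} (i : Fin n) : vertexOf n (emb n i) = i :=
  Fin.ext (Nat.mod_eq_of_lt i.isLt)

theorem vertexOf_bar {n : ℕ} (x : Fin (2 * n)) : vertexOf n (bar n x) = vertexOf n x :=
  Fin.ext <| (Nat.mod_mod_of_dvd _ (dvd_mul_left n 2)).trans (Nat.add_mod_right _ _)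

theorem bar_bar {n : ℕ} (x : Fin (2 * n)) : bar n (bar n x) = x := by
  ext
  simp only [bar]
  rw [Nat.mod_add_mod, add_assoc, ← two_mul, Nat.add_mod_right, Nat.mod_eq_of_lt x.isLt]

theorem eq_emb_or_eq_bar_emb {n : ℕ} (x : Fin (2 * n)) :
    x = emb n (vertexOf n x) ∨ x = bar n (emb n (vertexOf n x)) := by
  rcases lt_or_ge x.val n with h | h
  · left
    ext
    simp [emb, vertexOf, Nat.mod_eq_of_lt h]
  · right
    ext
    have hmod : x % n = x - n := by
      rw [Nat.mod_eq_sub_mod h, Nat.mod_eq_of_lt (by omega)]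
    simp only [bar, emb, vertexOf, Fin.val_castLE, hmod]
    rw [Nat.sub_add_cancel h, Nat.mod_eq_of_lt x.isLt]

def tokenEquiv (n : ℕ) : Fin n ⊕ Fin n ≃ Fin (2 * n) :=
  finSumFinEquiv.trans (finCongr (two_mul n).symm)

theorem tokenEquiv_inl {n : ℕ} (i : Fin n) : tokenEquiv n (.inl i) = emb n i := by
  ext
  simp [tokenEquiv, emb]

theorem tokenEquiv_inr {n : ℕ} (i : Fin n) : tokenEquiv n (.inr i) = bar n (emb n i) := by
  ext
  simp only [tokenEquiv, bar, emb, Equiv.trans_apply, finSumFinEquiv_apply_right, finCongr_apply,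
    Fin.val_cast, Fin.val_natAdd, Fin.val_castLE]
  rw [add_comm, Nat.mod_eq_of_lt (by omega)]

theorem vertexOf_tokenEquiv {n : ℕ} (y : Fin n ⊕ Fin n) :
    vertexOf n (tokenEquiv n y) = Sum.elim id id y := by
  cases y <;> simp [tokenEquiv_inl, tokenEquiv_inr, vertexOf_bar, vertexOf_emb]

def SubtreeIntervals (n : ℕ) (B : Fin n → Fin n → Prop) (π : Equiv.Perm (Fin (2 * n))) : Prop :=
  ∀ v x, π x ∈ Set.Icc (π (emb n v)) (π (bar n (emb n v))) ↔ ReflTransGen B v (vertexOf n x)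

theorem IsBranching.exists_subtreeIntervals {n : ℕ} {B : Fin n → Fin n → Prop}
    (hB : IsBranching B) : ∃ π, SubtreeIntervals n B π := by
  set τ := tokenEquiv n
  have hnd : (hB.tour.map τ).Nodup := hB.nodup_tour.map τ.injective
  have hmem : ∀ x, x ∈ hB.tour.map τ := fun x =>
    List.mem_map.mpr ⟨τ.symm x, hB.mem_tour _, τ.apply_symm_apply x⟩
  obtain ⟨π, hπ⟩ := hnd.exists_perm_val_eq_idxOf hmem
  refine ⟨π, fun v x => ?_⟩
  have hsub : (hB.subtreeTour v).map τ =
      emb n v :: ((children B v).flatMap hB.subtreeTour).map τ ++ [bar n (emb n v)] := by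
    rw [hB.subtreeTour_eq]
    simp [τ, tokenEquiv_inl, tokenEquiv_inr]
  have hinfix := hsub ▸ (hB.subtreeTour_infix_tour v).map τ
  obtain ⟨y, rfl⟩ := τ.surjective x
  rw [Set.mem_Icc, Fin.le_def, Fin.le_def, hπ, hπ, hπ, ← Set.mem_Icc,
    hnd.idxOf_mem_Icc_iff_mem_of_infix hinfix (hmem _), ← hsub,
    List.mem_map_of_injective τ.injective, mem_subtreeTour, vertexOf_tokenEquiv]

namespace SubtreeIntervals

variable {n : ℕ} {B : Fin n → Fin n → Prop} {π : Equiv.Perm (Fin (2 * n))}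

theorem emb_le_bar (h : SubtreeIntervals n B π) (v : Fin n) :
    π (emb n v) ≤ π (bar n (emb n v)) :=
  ((h v _).mpr (by rw [vertexOf_bar, vertexOf_emb])).1

theorem nested (h : SubtreeIntervals n B π) : Nested n π := by
  intro e f he
  rcases eq_emb_or_eq_bar_emb e with he' | he'
  · rw [← Set.mem_Icc, ← Set.mem_Icc, he', h, h, vertexOf_bar]
  · rw [he', bar_bar] at he
    exact absurd (h.emb_le_bar _) (not_le.mpr he)

theorem gpi_iff (h : SubtreeIntervals n B π) (hacyclic : ∀ v, ¬ TransGen B v v) (i j : Fin n) :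
    Gpi n π i j ↔ TransGen B i j := by
  have hlo : ∀ v, lo n π v = π (emb n v) := fun v => min_eq_left (h.emb_le_bar v)
  have hhi : ∀ v, hi n π v = π (bar n (emb n v)) := fun v => max_eq_right (h.emb_le_bar v)
  rw [Gpi, hlo, hlo, hhi, hhi]
  constructor
  · rintro ⟨hne, hlt, hgt⟩
    have hij := (h i (emb n j)).mp ⟨hlt.le, (h.emb_le_bar j).trans hgt.le⟩
    rw [vertexOf_emb] at hij
    exact (reflTransGen_iff_eq_or_transGen.mp hij).resolve_left (Ne.symm hne)
  · intro hij
    have hne : i ≠ j := by rintro rfl; exact hacyclic i hij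
    have hemb := (h i (emb n j)).mpr (by rw [vertexOf_emb]; exact hij.to_reflTransGen)
    have hbar := (h i (bar n (emb n j))).mpr
      (by rw [vertexOf_bar, vertexOf_emb]; exact hij.to_reflTransGen)
    refine ⟨hne, lt_of_le_of_ne hemb.1 fun heq => hne ?_, lt_of_le_of_ne hbar.2 fun heq => hne ?_⟩
    · simpa [vertexOf_emb] using congrArg (vertexOf n) (π.injective heq)
    · simpa [vertexOf_bar, vertexOf_emb] using congrArg (vertexOf n) (π.injective heq).symm

end SubtreeIntervals

/-- Every transitive closure of a branching on `[n]` arises as the containment graph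
`G_π` for some permutation `π` of `[2n]` satisfying the nesting condition. -/
theorem stmt6 (n : ℕ) (B : Fin n → Fin n → Prop) (hB : IsBranching B) :
    ∃ π : Equiv.Perm (Fin (2 * n)), Nested n π ∧
      ∀ i j, Gpi n π i j ↔ Relation.TransGen B i j := by
  obtain ⟨π, hπ⟩ := hB.exists_subtreeIntervals
  exact ⟨π, hπ.nested, hπ.gpi_iff hB.2⟩
end

section
/- A finite directed acyclic graph G (without loops) is the transitive closure of a branching if and only if G is transitive and every vertex's set of in-neighbors is totally ordered by the edge relation (i.e., for any two distinct in-neighbors p₁, p₂ of a vertex x, either (p₁,p₂) ∈ E or (p₂,p₁) ∈ E). -/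
/-!
In a relation with in-degree at most one, any two ancestors of a vertex lie on its unique
backward path, so they are comparable; this gives the forward direction. Conversely, a finite
transitive irreflexive relation is the transitive closure of its transitive reduction (its
covering edges), and totality of in-neighbourhoods says exactly that each vertex is covered by
at most one vertex, so the reduction is a branching.
-/

open Relation Function

namespace Relator.LeftUnique

variable {α : Type*} {B : α → α → Prop}

theorem reflTransGen_total (hB : LeftUnique B) {a b c : α} (ha : ReflTransGen B a c)
    (hb : ReflTransGen B b c) : ReflTransGen B a b ∨ ReflTransGen B b a := by
  induction ha generalizing b with
  | refl => exact .inr hb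
  | tail ha' hdc ih =>
    rcases hb.cases_tail with rfl | ⟨d', hb', hd'c⟩
    · exact .inl (ha'.tail hdc)
    · exact ih (hB hdc hd'c ▸ hb')

theorem transGen_total (hB : LeftUnique B) {a b c : α} (ha : TransGen B a c)
    (hb : TransGen B b c) (hab : a ≠ b) : TransGen B a b ∨ TransGen B b a := by
  rcases hB.reflTransGen_total ha.to_reflTransGen hb.to_reflTransGen with h | h
  · rcases reflTransGen_iff_eq_or_transGen.mp h with rfl | h
    · exact absurd rfl hab
    · exact .inl h
  · rcases reflTransGen_iff_eq_or_transGen.mp h with rfl | h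
    · exact absurd rfl hab.symm
    · exact .inr h

end Relator.LeftUnique

def transReduction {V : Type*} (G : V → V → Prop) (u w : V) : Prop :=
  G u w ∧ ∀ v, G u v → ¬ G v w

section TransReduction

variable {V : Type*} {G : V → V → Prop}

theorem transReduction_le : transReduction G ≤ G := fun _ _ h => h.1

theorem Relator.LeftUnique.transReduction
    (hG : ∀ x p₁ p₂, G p₁ x → G p₂ x → p₁ ≠ p₂ → G p₁ p₂ ∨ G p₂ p₁) :
    Relator.LeftUnique (transReduction G) := by
  intro a b c ha hb
  by_contra hab
  rcases hG c a b ha.1 hb.1 hab with h | h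
  · exact ha.2 b h hb.1
  · exact hb.2 a h ha.1

theorem transGen_transReduction_of_rel [Finite V] [IsTrans V G] [Std.Irrefl G] {u w : V}
    (h : G u w) : TransGen (transReduction G) u w := by
  induction w using (Finite.wellFounded_of_trans_of_irrefl G).induction with
  | _ w ih =>
    by_cases hw : ∀ v, G u v → ¬ G v w
    · exact .single ⟨h, hw⟩
    push Not at hw
    obtain ⟨v, huv, hvw⟩ := hw
    -- a `G`-maximal vertex `m` strictly between `u` and `w` is covered by `w`
    obtain ⟨m, ⟨hum, hmw⟩, hmax⟩ := (Finite.wellFounded_of_trans_of_irrefl (swap G)).has_min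
      {v | G u v ∧ G v w} ⟨v, huv, hvw⟩
    exact (ih m hmw hum).tail ⟨hmw, fun z hmz hzw => hmax z ⟨_root_.trans hum hmz, hzw⟩ hmz⟩

theorem transGen_transReduction [Finite V] [IsTrans V G] [Std.Irrefl G] :
    TransGen (transReduction G) = G := by
  ext u w
  refine ⟨fun h => ?_, transGen_transReduction_of_rel⟩
  rw [← transGen_eq_self (r := G)]
  exact TransGen.mono transReduction_le _ _ h

end TransReduction

/-- A finite loopless DAG is the transitive closure of a branching iff it is transitive
and the in-neighbourhood of every vertex is totally ordered by the edge relation. -/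
theorem stmt7 {V : Type*} [Fintype V] (G : V → V → Prop)
    (hacyc : ∀ v, ¬ Relation.TransGen G v v) :
    (∃ B : V → V → Prop, IsBranching B ∧ ∀ u w, G u w ↔ Relation.TransGen B u w) ↔
    ((∀ x y z, G x y → G y z → G x z) ∧
      ∀ x p₁ p₂, G p₁ x → G p₂ x → p₁ ≠ p₂ → (G p₁ p₂ ∨ G p₂ p₁)) := by
  constructor
  · rintro ⟨B, ⟨hB, -⟩, hG⟩
    obtain rfl : G = TransGen B := funext₂ fun u w => propext (hG u w)
    have hB : Relator.LeftUnique B := fun a b c => hB a b c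
    exact ⟨fun _ _ _ => TransGen.trans, fun _ _ _ => hB.transGen_total⟩
  · rintro ⟨htrans, hin⟩
    have : IsTrans V G := ⟨htrans⟩
    have : Std.Irrefl G := ⟨fun v hv => hacyc v (.single hv)⟩
    refine ⟨transReduction G, ⟨fun _ _ _ => (Relator.LeftUnique.transReduction hin ·), ?_⟩, ?_⟩
    · rw [transGen_transReduction]
      exact irrefl
    · rw [transGen_transReduction]
      exact fun _ _ => .rfl
end

section
/- Let G be a finite DAG (loops at every vertex, no other cycles) that is not the transitive closure of a branching (ignoring loops). Then G contains, as an induced subgraph on three vertices {x,y,z}, either (G₁) edges (x,y) and (y,z) but not (x,z), or (G₂) edges (p₁,x) and (p₂,x) with no edge between p₁ and p₂ in either direction. -/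
/-- If a finite graph with loops at every vertex and no other directed cycles is not
(ignoring loops) the transitive closure of a branching, then it contains one of the two
forbidden graphs `G₁` (a path `x → y → z` without the transitive edge) or `G₂` (two
incomparable in-neighbours of one vertex) as an induced subgraph on three vertices. -/
theorem stmt8 {V : Type*} [Fintype V] (G : V → V → Prop)
    (hloops : ∀ v, G v v)
    (hacyc : ∀ v, ¬ Relation.TransGen (fun a b => G a b ∧ a ≠ b) v v)
    (hnotbr : ¬ ∃ B : V → V → Prop, IsBranching B ∧
      ∀ u w, (G u w ∧ u ≠ w) ↔ Relation.TransGen B u w) :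
    ∃ x y z : V, x ≠ y ∧ y ≠ z ∧ x ≠ z ∧
      (((G x y ∧ G y z ∧ ¬ G x z) ∧ (¬ G y x ∧ ¬ G z y ∧ ¬ G z x)) ∨
       ((G x z ∧ G y z ∧ ¬ G x y ∧ ¬ G y x) ∧ (¬ G z x ∧ ¬ G z y))) := by
  classical
  by_contra h
  set G' : V → V → Prop := fun a b => G a b ∧ a ≠ b with hG'
  -- asymmetry
  have asym : ∀ a b, G' a b → ¬ G b a := by
    rintro a b ⟨hab, hne⟩ hba
    exact hacyc a (Relation.TransGen.head ⟨hab, hne⟩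
      (Relation.TransGen.single ⟨hba, hne.symm⟩))
  -- transitivity of G'
  have trans : ∀ x y z, G' x y → G' y z → G' x z := by
    rintro x y z ⟨hxy, hxyne⟩ ⟨hyz, hyzne⟩
    have hxz : x ≠ z := by
      rintro rfl
      exact asym x y ⟨hxy, hxyne⟩ hyz
    refine ⟨?_, hxz⟩
    by_contra hGxz
    exact h ⟨x, y, z, hxyne, hyzne, hxz, Or.inl ⟨⟨hxy, hyz, hGxz⟩,
      asym x y ⟨hxy, hxyne⟩, asym y z ⟨hyz, hyzne⟩,
      fun hzx => hacyc x (Relation.TransGen.head ⟨hxy, hxyne⟩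
        (Relation.TransGen.head ⟨hyz, hyzne⟩
          (Relation.TransGen.single ⟨hzx, hxz.symm⟩)))⟩⟩
  -- comparability of in-neighbours
  have comp : ∀ p q x, G' p x → G' q x → p ≠ q → G' q p ∨ G' p q := by
    rintro p q x ⟨hpx, hpne⟩ ⟨hqx, hqne⟩ hne
    by_cases h1 : G q p
    · exact Or.inl ⟨h1, hne.symm⟩
    by_cases h2 : G p q
    · exact Or.inr ⟨h2, hne⟩
    exact absurd (h ⟨p, q, x, hne, hqne, hpne, Or.inr ⟨⟨hpx, hqx, h2, h1⟩,
      asym p x ⟨hpx, hpne⟩, asym q x ⟨hqx, hqne⟩⟩⟩) (fun hf => hf)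
  -- well-foundedness of the reverse of TransGen G'
  have hwf : WellFounded (fun a b : V => Relation.TransGen G' b a) := by
    haveI : IsTrans V (fun a b : V => Relation.TransGen G' b a) :=
      ⟨fun a b c hab hbc => Relation.TransGen.trans hbc hab⟩
    haveI : IsIrrefl V (fun a b : V => Relation.TransGen G' b a) := ⟨fun a => hacyc a⟩
    exact Finite.wellFounded_of_trans_of_irrefl _
  -- the branching: edge from the maximal in-neighbour
  set B : V → V → Prop := fun u w => G' u w ∧ ∀ v, G' v w → v = u ∨ G' v u with hB
  have hBsub : ∀ u w, B u w → G' u w := fun u w hb => hb.1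
  -- B has in-degree ≤ 1
  have huniq : ∀ u v w, B u w → B v w → u = v := by
    rintro u v w ⟨huw, hu⟩ ⟨hvw, hv⟩
    by_contra hne
    rcases hu v hvw with rfl | hvu
    · exact hne rfl
    rcases hv u huw with rfl | huv
    · exact hne rfl
    exact asym v u hvu huv.1
  -- TransGen B ⊆ G'
  have hTB : ∀ u w, Relation.TransGen B u w → G' u w := by
    intro u w hb
    induction hb with
    | single h => exact hBsub _ _ h
    | tail _ h ih => exact trans _ _ _ ih (hBsub _ _ h)
  -- B is acyclic
  have hBacyc : ∀ v, ¬ Relation.TransGen B v v := fun v hv => (hTB v v hv).2 rfl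
  -- in-neighbour sets
  set S : V → Finset V := fun w => Finset.univ.filter (fun v => G' v w) with hS
  have hmem : ∀ v w, v ∈ S w ↔ G' v w := by
    intro v w; simp [hS]
  -- every vertex with an in-neighbour has a maximal in-neighbour, giving a B-edge
  have hmax : ∀ w u, G' u w → ∃ m, B m w := by
    intro w u huw
    obtain ⟨m, hmS, hmin⟩ := hwf.has_min {v | G' v w} ⟨u, huw⟩
    refine ⟨m, hmS, fun v hvw => ?_⟩
    by_cases hvm : v = m
    · exact Or.inl hvm
    rcases comp v m w hvw hmS hvm with hmv | hvm'
    · exact absurd (Relation.TransGen.single hmv) (hmin v hvw)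
    · exact Or.inr hvm'
  -- G' ⊆ TransGen B, by induction on the size of the in-neighbour set
  have hGT : ∀ n w u, (S w).card ≤ n → G' u w → Relation.TransGen B u w := by
    intro n
    induction n with
    | zero =>
      intro w u hc huw
      exact absurd ((hmem u w).2 huw) (Finset.card_eq_zero.1 (Nat.le_zero.1 hc) ▸
        Finset.notMem_empty u)
    | succ n ih =>
      intro w u hc huw
      obtain ⟨m, hmB⟩ := hmax w u huw
      by_cases hum : u = m
      · exact hum ▸ Relation.TransGen.single hmB
      have hum' : G' u m := by
        rcases hmB.2 u huw with rfl | h'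
        · exact absurd rfl hum
        · exact h'
      have hsub : S m ⊂ S w := by
        constructor
        · intro v hv
          exact (hmem v w).2 (trans v m w ((hmem v m).1 hv) hmB.1)
        · intro hsub'
          have := (hmem m m).1 (hsub' ((hmem m w).2 hmB.1))
          exact this.2 rfl
      have hcard : (S m).card ≤ n :=
        Nat.lt_succ_iff.1 (lt_of_lt_of_le (Finset.card_lt_card hsub) hc)
      exact Relation.TransGen.tail (ih m u hcard hum') hmB
  exact hnotbr ⟨B, ⟨huniq, hBacyc⟩, fun u w =>
    ⟨fun huw => hGT (S w).card w u le_rfl huw, fun hb => hTB u w hb⟩⟩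
end

section
/- Let m be a Matoušek-type USO of the n-cube with dimension influence graph G, and fix a dimension i. Flipping the direction of every edge of the lower i-facet (all edges between vertices not containing i) yields an orientation m' which is a Matoušek-type USO if and only if the graph G' obtained from G by toggling the presence of edge (i,j) for every j ≠ i is acyclic apart from loops; and in that case the dimension influence graph of m' is G'. -/
open scoped symmDiff

/-- The Szábo-Welzl unique sink condition. -/
def IsUSO (n : ℕ) (o : Finset (Fin n) → Finset (Fin n)) : Prop :=
  ∀ v w : Finset (Fin n), v ≠ w → ((v ∆ w) ∩ (o v ∆ o w)).Nonempty

/-!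
If `H` is the influence graph of an outmap `o`, then `o v` and `o w` differ in `d'` iff an odd
number of `d ∈ v ∆ w` satisfy `H d d'`. So `o` is a USO iff every nonempty `D` contains some `d'`
with an odd number of `H`-in-neighbours in `D`, loops included. If `H` has no cycle, some vertex
of `D` has no in-neighbour in `D` but itself. If `H` has a cycle, there is an inclusion-minimal
nonempty set in which every vertex has a non-loop in-neighbour; it is an induced cycle, so all
its in-degrees are two. Flipping the lower `i`-facet toggles exactly the influences `(i, j)`,
`j ≠ i`.
-/

open Finset Relation

section SourceFree

variable {α : Type*} (E : α → α → Prop)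

def IsSourceFree (D : Finset α) : Prop :=
  D.Nonempty ∧ ∀ x ∈ D, ∃ y ∈ D, E y x

variable {E}

lemma IsSourceFree.mono {E' : α → α → Prop} (h : ∀ a b, E a b → E' a b) {D : Finset α}
    (hD : IsSourceFree E D) : IsSourceFree E' D :=
  ⟨hD.1, fun x hx => (hD.2 x hx).imp fun _ ⟨hy, hyx⟩ => ⟨hy, h _ _ hyx⟩⟩

variable [Fintype α]

open Classical in
lemma isSourceFree_filter_transGen {z : α} (hz : TransGen E z z) :
    IsSourceFree E (univ.filter (TransGen E z ·)) := by
  refine ⟨⟨z, by simpa using hz⟩, fun w hw => ?_⟩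
  obtain ⟨u, hzu, huw⟩ := TransGen.tail'_iff.mp (mem_filter.mp hw).2
  refine ⟨u, mem_filter.mpr ⟨mem_univ u, ?_⟩, huw⟩
  rcases reflTransGen_iff_eq_or_transGen.mp hzu with rfl | hzu
  exacts [hz, hzu]

lemma Minimal.pred_eq_of_isSourceFree {D : Finset α} (hD : Minimal (IsSourceFree E) D)
    (hirr : ∀ a, ¬ E a a) {x y₁ y₂ : α} (hx : x ∈ D) (hy₁ : y₁ ∈ D) (hy₂ : y₂ ∈ D)
    (h₁ : E y₁ x) (h₂ : E y₂ x) : y₁ = y₂ := by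
  classical
  set E' : α → α → Prop := fun a b => E a b ∧ b ∈ D.erase x
  -- Minimality applied to `x` together with the vertices reaching `y` inside `D.erase x`.
  have reach : ∀ {y y'}, y ∈ D → y' ∈ D → E y x → y' ≠ x → ReflTransGen E' y' y := by
    intro y y' hy hy' hyx hy'x
    have hA : IsSourceFree E (insert x (D.filter (ReflTransGen E' · y))) := by
      refine ⟨insert_nonempty _ _, fun w hw => ?_⟩
      by_cases hwx : w = x
      · exact ⟨y, mem_insert_of_mem (mem_filter.mpr ⟨hy, .refl⟩), hwx ▸ hyx⟩
      obtain ⟨hwD, hwy⟩ := mem_filter.mp ((mem_insert.mp hw).resolve_left hwx)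
      obtain ⟨u, hu, huw⟩ := hD.1.2 w hwD
      refine ⟨u, ?_, huw⟩
      by_cases hux : u = x
      · exact hux ▸ mem_insert_self _ _
      exact mem_insert_of_mem (mem_filter.mpr ⟨hu, .head ⟨huw, mem_erase.mpr ⟨hwx, hwD⟩⟩ hwy⟩)
    have := hD.2 hA (insert_subset hx (filter_subset _ _)) hy'
    exact (mem_filter.mp ((mem_insert.mp this).resolve_left hy'x)).2
  by_contra hne
  have ne_x : ∀ {y}, E y x → y ≠ x := by rintro y hyx rfl; exact hirr _ hyx
  have cycle : TransGen E' y₂ y₂ :=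
    ((reflTransGen_iff_eq_or_transGen.mp (reach hy₁ hy₂ h₁ (ne_x h₂))).resolve_left hne).trans_left
      (reach hy₂ hy₁ h₂ (ne_x h₁))
  have hC := isSourceFree_filter_transGen cycle
  have hCsub : univ.filter (TransGen E' y₂ ·) ⊆ D.erase x := fun w hw => by
    obtain ⟨_, _, hw⟩ := TransGen.tail'_iff.mp (mem_filter.mp hw).2
    exact hw.2
  have := hD.2 (hC.mono fun _ _ h => h.1) (hCsub.trans (erase_subset _ _)) hx
  exact notMem_erase x D (hCsub this)

end SourceFree

section Parity

open scoped Classical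

variable {α : Type*} {H : α → α → Prop}

lemma exists_odd_card_filter_of_wellFounded (hloops : ∀ d, H d d)
    (hwf : WellFounded fun a b => H a b ∧ a ≠ b) {D : Finset α} (hD : D.Nonempty) :
    ∃ d ∈ D, Odd #{x ∈ D | H x d} := by
  obtain ⟨d, hd, hmin⟩ := hwf.has_min (D : Set α) (by exact_mod_cast hD)
  refine ⟨d, hd, ?_⟩
  have : {x ∈ D | H x d} = {d} := by
    ext x
    simp only [mem_filter, mem_singleton]
    refine ⟨fun ⟨hx, hxd⟩ => by_contra fun hne => hmin x hx ⟨hxd, hne⟩, ?_⟩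
    rintro rfl
    exact ⟨hd, hloops x⟩
  simp [this]

lemma even_card_filter_of_minimal_isSourceFree [Fintype α] (hloops : ∀ d, H d d) {D : Finset α}
    (hD : Minimal (IsSourceFree fun a b => H a b ∧ a ≠ b) D) {d : α} (hd : d ∈ D) :
    Even #{x ∈ D | H x d} := by
  obtain ⟨y, hy, hyd, hne⟩ := hD.1.2 d hd
  have : {x ∈ D | H x d} = {y, d} := by
    ext x
    simp only [mem_filter, mem_insert, mem_singleton]
    refine ⟨fun ⟨hx, hxd⟩ => ?_, ?_⟩
    · by_cases hxd' : x = d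
      · exact .inr hxd'
      · exact .inl (hD.pred_eq_of_isSourceFree (fun a h => h.2 rfl) hd hx hy ⟨hxd, hxd'⟩ ⟨hyd, hne⟩)
    · rintro (rfl | rfl)
      exacts [⟨hy, hyd⟩, ⟨hd, hloops x⟩]
  simp [this, card_pair hne]

theorem noNonloopCycle_iff_forall_exists_odd_card_filter {n : ℕ} {H : Fin n → Fin n → Prop}
    (hloops : ∀ d, H d d) :
    NoNonloopCycle n H ↔ ∀ D : Finset (Fin n), D.Nonempty → ∃ d ∈ D, Odd #{x ∈ D | H x d} := by
  set E : Fin n → Fin n → Prop := fun a b => H a b ∧ a ≠ b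
  constructor
  · intro hacyc D hD
    have : Std.Irrefl (TransGen E) := ⟨hacyc⟩
    have hwf : WellFounded (TransGen E) := Finite.wellFounded_of_trans_of_irrefl _
    exact exists_odd_card_filter_of_wellFounded hloops
      (hwf.mono fun _ _ h => .single h) hD
  · intro hodd d hcycle
    obtain ⟨D, -, hD⟩ :=
      exists_minimal_le_of_wellFoundedLT _ _ (isSourceFree_filter_transGen hcycle)
    obtain ⟨x, hx, hx_odd⟩ := hodd D hD.1.1
    exact Nat.not_even_iff_odd.mpr hx_odd (even_card_filter_of_minimal_isSourceFree hloops hD hx)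

end Parity

section Cube

open scoped Classical

variable {n : ℕ} {o : Finset (Fin n) → Finset (Fin n)} {H : Fin n → Fin n → Prop}

lemma mem_symmDiff_outmap_iff_odd_card_filter
    (hinf : ∀ d d' v, Xor (d' ∈ o v) (d' ∈ o (v ∆ {d})) ↔ H d d')
    (v D : Finset (Fin n)) (d' : Fin n) :
    d' ∈ o v ∆ o (v ∆ D) ↔ Odd #{d ∈ D | H d d'} := by
  induction D using Finset.induction_on with
  | empty => simp only [← bot_eq_empty, symmDiff_bot, symmDiff_self]; simp
  | insert a D ha ih =>
    have hvD : v ∆ insert a D = (v ∆ D) ∆ {a} := by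
      rw [symmDiff_assoc, insert_eq, union_comm,
        (disjoint_singleton_right.mpr ha).symmDiff_eq_sup, sup_eq_union]
    have hedge := hinf a d' (v ∆ D)
    rw [hvD, filter_insert]
    by_cases had : H a d'
    · rw [if_pos had, card_insert_of_notMem (fun h => ha (mem_filter.mp h).1), Nat.odd_add_one,
        ← ih]
      simp only [mem_symmDiff, Xor] at hedge ⊢
      tauto
    · rw [if_neg had, ← ih]
      simp only [mem_symmDiff, Xor] at hedge ⊢
      tauto

lemma isUSO_iff_forall_exists_odd_card_filter
    (hinf : ∀ d d' v, Xor (d' ∈ o v) (d' ∈ o (v ∆ {d})) ↔ H d d') :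
    IsUSO n o ↔ ∀ D : Finset (Fin n), D.Nonempty → ∃ d ∈ D, Odd #{x ∈ D | H x d} := by
  have key := mem_symmDiff_outmap_iff_odd_card_filter hinf
  constructor
  · intro hUSO D hD
    have hne : ∅ ≠ ∅ ∆ D := by
      rwa [← bot_eq_empty, bot_symmDiff, bot_eq_empty, ne_comm, ← nonempty_iff_ne_empty]
    obtain ⟨d, hd⟩ := hUSO ∅ (∅ ∆ D) hne
    rw [symmDiff_symmDiff_cancel_left, mem_inter] at hd
    exact ⟨d, hd.1, (key ∅ D d).mp hd.2⟩
  · intro hodd v w hvw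
    have hD : (v ∆ w).Nonempty := by
      rwa [nonempty_iff_ne_empty, Ne, ← bot_eq_empty, symmDiff_eq_bot]
    obtain ⟨d, hd, hd_odd⟩ := hodd _ hD
    refine ⟨d, mem_inter.mpr ⟨hd, ?_⟩⟩
    simpa only [symmDiff_symmDiff_cancel_left] using (key v (v ∆ w) d).mpr hd_odd

theorem isUSO_iff_noNonloopCycle (hloops : ∀ d, H d d)
    (hinf : ∀ d d' v, Xor (d' ∈ o v) (d' ∈ o (v ∆ {d})) ↔ H d d') :
    IsUSO n o ↔ NoNonloopCycle n H :=
  (isUSO_iff_forall_exists_odd_card_filter hinf).trans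
    (noNonloopCycle_iff_forall_exists_odd_card_filter hloops).symm

end Cube

lemma influence_flip_lowerFacet {n : ℕ} {G : Fin n → Fin n → Prop}
    {m : Finset (Fin n) → Finset (Fin n)}
    (hinf : ∀ d d' v, Xor (d' ∈ m v) (d' ∈ m (v ∆ {d})) ↔ G d d') (i : Fin n)
    {m' : Finset (Fin n) → Finset (Fin n)}
    (hm' : ∀ v, m' v = if i ∈ v then m v else m v ∆ (univ \ {i}))
    {G' : Fin n → Fin n → Prop}
    (hG' : ∀ d d', G' d d' ↔ (if d = i ∧ d' ≠ i then ¬ G d d' else G d d'))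
    (d d' : Fin n) (v : Finset (Fin n)) :
    Xor (d' ∈ m' v) (d' ∈ m' (v ∆ {d})) ↔ G' d d' := by
  have hmem : ∀ w d', d' ∈ m' w ↔ Xor (d' ∈ m w) (i ∉ w ∧ d' ≠ i) := by
    intro w d'
    rw [hm']
    split_ifs <;> simp [mem_symmDiff, Xor, *]
  have hi : i ∈ v ∆ {d} ↔ Xor (i ∈ v) (d = i) := by
    simp only [mem_symmDiff, mem_singleton, Xor, eq_comm]
  rw [hmem, hmem, hG', ← hinf d d' v, hi]
  by_cases hd : d = i <;> by_cases hd' : d' = i <;> simp [hd, hd', Xor] <;> tauto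

theorem stmt16_general (n : ℕ) (G : Fin n → Fin n → Prop)
    (hloops : ∀ d, G d d)
    (m : Finset (Fin n) → Finset (Fin n))
    (hinf : ∀ (d d' : Fin n) (v : Finset (Fin n)),
      (Xor' (d' ∈ m v) (d' ∈ m (v ∆ {d})) ↔ G d d'))
    (i : Fin n)
    (m' : Finset (Fin n) → Finset (Fin n))
    (hm' : ∀ v, m' v = if i ∈ v then m v else m v ∆ (Finset.univ \ {i}))
    (G' : Fin n → Fin n → Prop)
    (hG' : ∀ d d', G' d d' ↔ (if d = i ∧ d' ≠ i then ¬ G d d' else G d d')) :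
    (∀ (d d' : Fin n) (v : Finset (Fin n)),
      (Xor' (d' ∈ m' v) (d' ∈ m' (v ∆ {d})) ↔ G' d d')) ∧
    (IsUSO n m' ↔ NoNonloopCycle n G') := by
  have hinf' := influence_flip_lowerFacet hinf i hm' hG'
  have hloops' : ∀ d, G' d d := fun d => by simpa [hG'] using hloops d
  exact ⟨hinf', isUSO_iff_noNonloopCycle hloops' hinf'⟩

/-- Flipping every edge of the lower `i`-facet of a Matoušek-type USO `m` with
dimension influence graph `G` (so `m' v = m v` if `i ∈ v`, and otherwise all
non-`i`-edges at `v` are reversed) yields an orientation `m'` whose dimension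
influence pattern is the graph `G'` obtained from `G` by toggling the edge `(i,j)`
for every `j ≠ i`; and `m'` is a (Matoušek-type) USO iff `G'` is acyclic apart from
loops. -/
theorem stmt16 (n : ℕ) (G : Fin n → Fin n → Prop)
    (hloops : ∀ d, G d d) (hacyc : NoNonloopCycle n G)
    (m : Finset (Fin n) → Finset (Fin n))
    (hor : IsOrientation n m) (hUSO : IsUSO n m)
    (hinf : ∀ (d d' : Fin n) (v : Finset (Fin n)),
      (Xor' (d' ∈ m v) (d' ∈ m (v ∆ {d})) ↔ G d d'))
    (i : Fin n)
    (m' : Finset (Fin n) → Finset (Fin n))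
    (hm' : ∀ v, m' v = if i ∈ v then m v else m v ∆ (Finset.univ \ {i}))
    (G' : Fin n → Fin n → Prop)
    (hG' : ∀ d d', G' d d' ↔ (if d = i ∧ d' ≠ i then ¬ G d d' else G d d')) :
    (∀ (d d' : Fin n) (v : Finset (Fin n)),
      (Xor' (d' ∈ m' v) (d' ∈ m' (v ∆ {d})) ↔ G' d d')) ∧
    (IsUSO n m' ↔ NoNonloopCycle n G') :=
  stmt16_general n G hloops m hinf i m' hm' G' hG'
end

section
/- Let G be the transitive closure of a branching on [n] and let S be the vertex set of a directed path in the branching starting at a root (using only direct, non-transitive edges), such that no vertex outside S lies on the path between two vertices of S in the transitive order. Define G_S by toggling, for every s ∈ S and every t ≠ s, whether (s,t) is an edge. Then G_S is again the transitive closure of a branching. -/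
section Abstract

variable {α : Type*} [Fintype α] (R : α → α → Prop)

/-- The covering relation of `R`. -/
def CovRel (a b : α) : Prop := R a b ∧ ∀ c, R a c → R c b → False

lemma transGen_covRel_le (htrans : ∀ a b c, R a b → R b c → R a c)
    {a b : α} (h : Relation.TransGen (CovRel R) a b) : R a b := by
  induction h with
  | single h => exact h.1
  | tail _ h ih => exact htrans _ _ _ ih h.1

open Classical in
lemma reach_covRel (htrans : ∀ a b c, R a b → R b c → R a c)
    (hirr : ∀ a, ¬ R a a) :
    ∀ N (a b : α), (Finset.univ.filter (fun c => R a c ∧ R c b)).card ≤ N →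
      R a b → Relation.TransGen (CovRel R) a b := by
  intro N
  induction N with
  | zero =>
    intro a b hcard hab
    refine Relation.TransGen.single ⟨hab, fun c h1 h2 => ?_⟩
    have hc : c ∈ Finset.univ.filter (fun c => R a c ∧ R c b) := by simp [h1, h2]
    have := Finset.card_pos.mpr ⟨c, hc⟩
    omega
  | succ N ih =>
    intro a b hcard hab
    by_cases hc : ∃ c, R a c ∧ R c b
    · obtain ⟨c, h1, h2⟩ := hc
      have hmem : c ∈ Finset.univ.filter (fun x => R a x ∧ R x b) := by simp [h1, h2]
      have hsub1 : (Finset.univ.filter (fun x => R a x ∧ R x c)) ⊆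
          (Finset.univ.filter (fun x => R a x ∧ R x b)).erase c := by
        intro x hx
        simp only [Finset.mem_filter, Finset.mem_univ, true_and] at hx
        refine Finset.mem_erase.mpr ⟨?_, by
          simp only [Finset.mem_filter, Finset.mem_univ, true_and]
          exact ⟨hx.1, htrans _ _ _ hx.2 h2⟩⟩
        rintro rfl
        exact hirr _ hx.2
      have hsub2 : (Finset.univ.filter (fun x => R c x ∧ R x b)) ⊆
          (Finset.univ.filter (fun x => R a x ∧ R x b)).erase c := by
        intro x hx
        simp only [Finset.mem_filter, Finset.mem_univ, true_and] at hx
        refine Finset.mem_erase.mpr ⟨?_, by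
          simp only [Finset.mem_filter, Finset.mem_univ, true_and]
          exact ⟨htrans _ _ _ h1 hx.1, hx.2⟩⟩
        rintro rfl
        exact hirr _ hx.1
      have hle : ((Finset.univ.filter (fun x => R a x ∧ R x b)).erase c).card ≤ N := by
        have := Finset.card_erase_of_mem hmem
        omega
      have hac := ih a c (le_trans (Finset.card_le_card hsub1) hle) h1
      have hcb := ih c b (le_trans (Finset.card_le_card hsub2) hle) h2
      exact hac.trans hcb
    · push_neg at hc
      exact Relation.TransGen.single ⟨hab, fun c h1 h2 => hc c h1 h2⟩

/-- Any finite, transitive, irreflexive relation whose ancestor sets are chains is the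
transitive closure of a branching. -/
theorem branching_of_forest_order (htrans : ∀ a b c, R a b → R b c → R a c)
    (hirr : ∀ a, ¬ R a a)
    (hchain : ∀ u v w, R u w → R v w → u = v ∨ R u v ∨ R v u) :
    ∃ B' : α → α → Prop, IsBranching B' ∧ ∀ a b, R a b ↔ Relation.TransGen B' a b := by
  classical
  refine ⟨CovRel R, ⟨?_, ?_⟩, fun a b => ⟨fun h => reach_covRel R htrans hirr _ a b le_rfl h,
    fun h => transGen_covRel_le R htrans h⟩⟩
  · intro u v w hu hv
    rcases hchain u v w hu.1 hv.1 with h | h | h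
    · exact h
    · exact (hu.2 v h hv.1).elim
    · exact (hv.2 u h hu.1).elim
  · intro v hv
    exact hirr v (transGen_covRel_le R htrans hv)

end Abstract

/-- Let `G` be the transitive closure of a branching `B` on `[n]` and let `S` be the
vertex set of a directed path in `B` starting at a root, such that no vertex outside
`S` lies between two vertices of `S` in the transitive order. Toggling the edge
`(s, t)` for every `s ∈ S` and every `t ≠ s` yields a graph `G_S` which is again the
transitive closure of a branching. -/
theorem stmt17 (n : ℕ) (B : Fin n → Fin n → Prop) (hB : IsBranching B)
    (G : Fin n → Fin n → Prop) (hG : ∀ a b, G a b ↔ Relation.TransGen B a b)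
    (S : Finset (Fin n)) (l : List (Fin n)) (hl : l ≠ []) (hnd : l.Nodup)
    (hchain : l.Chain' B) (hroot : ∀ u, ¬ B u (l.head hl))
    (hSl : ∀ a, a ∈ S ↔ a ∈ l)
    (hbetween : ∀ v ∉ S, ¬ ∃ u ∈ S, ∃ w ∈ S, G u v ∧ G v w)
    (GS : Fin n → Fin n → Prop)
    (hGS : ∀ a b, GS a b ↔ (if a ∈ S ∧ a ≠ b then ¬ G a b else G a b)) :
    ∃ B' : Fin n → Fin n → Prop, IsBranching B' ∧
      ∀ a b, GS a b ↔ Relation.TransGen B' a b := by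
  classical
  -- basic facts about G
  have hGtrans : ∀ a b c, G a b → G b c → G a c := fun a b c h1 h2 =>
    (hG a c).2 (((hG a b).1 h1).trans ((hG b c).1 h2))
  have hGirr : ∀ a, ¬ G a a := fun a h => hB.2 a ((hG a a).1 h)
  have hGasym : ∀ a b, G a b → G b a → False := fun a b h1 h2 =>
    hGirr a (hGtrans a b a h1 h2)
  -- a convenient "cases on the last edge" lemma
  have hlast : ∀ a b, Relation.TransGen B a b →
      ∃ p, (a = p ∨ Relation.TransGen B a p) ∧ B p b := by
    intro a b h
    obtain ⟨p, hp, hpb⟩ := Relation.TransGen.tail'_iff.1 h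
    rcases (Relation.reflTransGen_iff_eq_or_transGen.1 hp) with h' | h'
    · exact ⟨p, Or.inl h'.symm, hpb⟩
    · exact ⟨p, Or.inr h', hpb⟩
  -- F1: ancestors of any vertex form a chain
  have F1 : ∀ u w, Relation.TransGen B u w → ∀ v, Relation.TransGen B v w →
      u = v ∨ Relation.TransGen B u v ∨ Relation.TransGen B v u := by
    intro u w h
    induction h with
    | @single b h1 =>
      intro v hv
      obtain ⟨p, hp, hpb⟩ := hlast v b hv
      have : p = u := hB.1 p u b hpb h1
      subst this
      rcases hp with rfl | hp
      · exact Or.inl rfl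
      · exact Or.inr (Or.inr hp)
    | @tail b c hab hbc ih =>
      intro v hv
      obtain ⟨p, hp, hpc⟩ := hlast v c hv
      have : p = b := hB.1 p b c hpc hbc
      subst this
      rcases hp with rfl | hp
      · exact Or.inr (Or.inl hab)
      · exact ih v hp
  have F1G : ∀ u v w, G u w → G v w → u = v ∨ G u v ∨ G v u := by
    intro u v w h1 h2
    rcases F1 u w ((hG u w).1 h1) v ((hG v w).1 h2) with h | h | h
    · exact Or.inl h
    · exact Or.inr (Or.inl ((hG u v).2 h))
    · exact Or.inr (Or.inr ((hG v u).2 h))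
  -- F2: no vertex outside S is a G-ancestor of a vertex of S
  have F2' : ∀ j (hj : j < l.length) t, Relation.TransGen B t (l[j]'hj) → t ∈ l := by
    intro j
    induction j with
    | zero =>
      intro hj t ht
      obtain ⟨p, _, hpb⟩ := hlast t _ ht
      rw [← List.head_eq_getElem_zero hl] at hpb
      exact (hroot p hpb).elim
    | succ j ih =>
      intro hj t ht
      have hjlt : j < l.length := by omega
      have hstep : B (l[j]'hjlt) (l[j + 1]'hj) := List.isChain_iff_getElem.1 hchain j (by omega)
      obtain ⟨p, hp, hpb⟩ := hlast t _ ht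
      have : p = l[j]'hjlt := hB.1 p _ _ hpb hstep
      subst this
      rcases hp with rfl | hp
      · exact List.getElem_mem hjlt
      · exact ih hjlt t hp
  have F2 : ∀ t, t ∉ S → ∀ s ∈ S, ¬ G t s := by
    intro t ht s hs hts
    obtain ⟨j, hj, rfl⟩ := List.mem_iff_getElem.1 ((hSl s).1 hs)
    exact ht ((hSl t).2 (F2' j hj t ((hG t _).1 hts)))
  -- F3: S is totally ordered by G
  have hpw : l.Pairwise (Relation.TransGen B) :=
    List.isChain_iff_pairwise.1 (hchain.imp fun a b h => Relation.TransGen.single h)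
  have F3 : ∀ a ∈ S, ∀ b ∈ S, a = b ∨ G a b ∨ G b a := by
    intro a ha b hb
    obtain ⟨i, hi, rfl⟩ := List.mem_iff_getElem.1 ((hSl a).1 ha)
    obtain ⟨j, hj, rfl⟩ := List.mem_iff_getElem.1 ((hSl b).1 hb)
    rcases lt_trichotomy i j with h | h | h
    · exact Or.inr (Or.inl ((hG _ _).2 (List.pairwise_iff_getElem.1 hpw i j hi hj h)))
    · subst h; exact Or.inl rfl
    · exact Or.inr (Or.inr ((hG _ _).2 (List.pairwise_iff_getElem.1 hpw j i hj hi h)))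
  -- characterizations of GS
  have hGS1 : ∀ a b, a ∈ S → (GS a b ↔ (a ≠ b ∧ ¬ G a b)) := by
    intro a b ha
    rw [hGS]
    by_cases h : a = b
    · subst h
      simp [hGirr a]
    · simp [ha, h]
  have hGS2 : ∀ a b, a ∉ S → (GS a b ↔ G a b) := by
    intro a b ha
    rw [hGS]
    simp [ha]
  -- GS is transitive
  have hT : ∀ a b c, GS a b → GS b c → GS a c := by
    intro a b c hab hbc
    by_cases ha : a ∈ S
    · obtain ⟨hne, hnab⟩ := (hGS1 a b ha).1 hab
      by_cases hb : b ∈ S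
      · obtain ⟨hne2, hnbc⟩ := (hGS1 b c hb).1 hbc
        have hba : G b a := by
          rcases F3 a ha b hb with h | h | h
          · exact (hne h).elim
          · exact (hnab h).elim
          · exact h
        refine (hGS1 a c ha).2 ⟨?_, ?_⟩
        · rintro rfl
          exact hnbc hba
        · intro h
          exact hnbc (hGtrans b a c hba h)
      · have hgbc : G b c := (hGS2 b c hb).1 hbc
        refine (hGS1 a c ha).2 ⟨?_, ?_⟩
        · rintro rfl
          exact F2 b hb a ha hgbc
        · intro h
          rcases F1G a b c h hgbc with h' | h' | h'
          · exact hb (h' ▸ ha)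
          · exact hnab h'
          · exact F2 b hb a ha h'
    · have hgab := (hGS2 a b ha).1 hab
      by_cases hb : b ∈ S
      · exact (F2 a ha b hb hgab).elim
      · exact (hGS2 a c ha).2 (hGtrans a b c hgab ((hGS2 b c hb).1 hbc))
  -- GS is irreflexive
  have hI : ∀ a, ¬ GS a a := by
    intro a h
    by_cases ha : a ∈ S
    · exact ((hGS1 a a ha).1 h).1 rfl
    · exact hGirr a ((hGS2 a a ha).1 h)
  -- GS-ancestors of any vertex form a chain
  have hC : ∀ u v w, GS u w → GS v w → u = v ∨ GS u v ∨ GS v u := by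
    intro u v w hu hv
    by_cases hus : u ∈ S <;> by_cases hvs : v ∈ S
    · rcases F3 u hus v hvs with h | h | h
      · exact Or.inl h
      · refine Or.inr (Or.inr ((hGS1 v u hvs).2 ⟨?_, ?_⟩))
        · rintro rfl
          exact hGirr v h
        · intro h'
          exact hGasym u v h h'
      · refine Or.inr (Or.inl ((hGS1 u v hus).2 ⟨?_, ?_⟩))
        · rintro rfl
          exact hGirr u h
        · intro h'
          exact hGasym v u h h'
    · obtain ⟨hwu, hnuw⟩ := (hGS1 u w hus).1 hu
      have hgvw := (hGS2 v w hvs).1 hv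
      refine Or.inr (Or.inl ((hGS1 u v hus).2 ⟨?_, ?_⟩))
      · rintro rfl
        exact hvs hus
      · intro h
        exact hnuw (hGtrans u v w h hgvw)
    · obtain ⟨hwv, hnvw⟩ := (hGS1 v w hvs).1 hv
      have hguw := (hGS2 u w hus).1 hu
      refine Or.inr (Or.inr ((hGS1 v u hvs).2 ⟨?_, ?_⟩))
      · rintro rfl
        exact hus hvs
      · intro h
        exact hnvw (hGtrans v u w h hguw)
    · have hguw := (hGS2 u w hus).1 hu
      have hgvw := (hGS2 v w hvs).1 hv
      rcases F1G u v w hguw hgvw with h | h | h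
      · exact Or.inl h
      · exact Or.inr (Or.inl ((hGS2 u v hus).2 h))
      · exact Or.inr (Or.inr ((hGS2 v u hvs).2 h))
  exact branching_of_forest_order GS hT hI hC
end

section
/- Let π be a permutation of [2n] violating the nesting condition: there exist e, f such that exactly one of π(f), π(f̄) lies in the interval [π(e), π(ē)]. Then for any F ⊆ [2n], there exists an almost-complementary set C of size n+1 containing {e, ē} and exactly one of g, ḡ for each other complementary pair, such that the alternating-sign assignment along π (with F-flips) gives e and ē opposite signs. -/
/-- The sign of an element `g` of the almost-complementary set `C`: alternate `+,-,…`
along the `π`-order of `C` and then flip the signs of elements of `F`. -/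
def sgn (n : ℕ) (π : Equiv.Perm (Fin (2 * n))) (F C : Finset (Fin (2 * n)))
    (g : Fin (2 * n)) : ℤ :=
  (if g ∈ F then -1 else 1) * (-1) ^ (C.filter (fun h => π h < π g)).card

open Finset Function

section Transversal

variable {α : Type*} {σ : α → α} {T : Finset α} {x : α}

def IsTransversal (σ : α → α) (T : Finset α) : Prop :=
  ∀ x, x ∈ T ↔ σ x ∉ T

namespace IsTransversal

theorem apply_ne (hT : IsTransversal σ T) (x : α) : σ x ≠ x := by
  intro h
  have := hT x
  rw [h] at this
  tauto

theorem apply_notMem (hT : IsTransversal σ T) (hx : x ∈ T) : σ x ∉ T :=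
  (hT x).1 hx

theorem mem_or_apply_mem (hT : IsTransversal σ T) (x : α) : x ∈ T ∨ σ x ∈ T := by
  rw [hT x]
  tauto

theorem two_mul_card [DecidableEq α] [Fintype α] (hσ : Involutive σ) (hT : IsTransversal σ T) :
    2 * #T = Fintype.card α := by
  have himage : T.image σ = Tᶜ := by
    ext y
    rw [mem_image, mem_compl, hT y, not_not]
    exact ⟨fun ⟨z, hz, hzy⟩ => hzy ▸ (hσ z).symm ▸ hz, fun hy => ⟨σ y, hy, hσ y⟩⟩
  have := card_image_of_injective T hσ.injective
  rw [himage, card_compl] at this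
  have := card_le_univ T
  omega

theorem insert_erase [DecidableEq α] (hσ : Involutive σ) (hT : IsTransversal σ T) (x : α) :
    IsTransversal σ (insert x (T.erase (σ x))) := by
  intro y
  simp only [mem_insert, mem_erase, ne_eq, hσ.injective.eq_iff]
  rcases eq_or_ne y x with rfl | hyx
  · simp [hT.apply_ne y]
  rcases eq_or_ne y (σ x) with rfl | hyσx
  · simp [hσ x, hT.apply_ne x]
  have : σ y ≠ x := fun h => hyσx (h ▸ (hσ y).symm)
  simp [hyx, hyσx, this, hT y]

theorem exists_mem_mem [DecidableEq α] (hσ : Involutive σ) (hT : IsTransversal σ T) {x y : α}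
    (hxy : y ≠ σ x) :
    ∃ T', IsTransversal σ T' ∧ x ∈ T' ∧ y ∈ T' := by
  refine ⟨_, (hT.insert_erase hσ x).insert_erase hσ y, ?_, mem_insert_self _ _⟩
  have : x ≠ σ y := fun h => hxy (by rw [h, hσ])
  simp [this]

theorem almostComplementary_insert_apply [DecidableEq α] (hσ : Involutive σ)
    (hT : IsTransversal σ T) (hx : x ∈ T) :
    #(insert (σ x) T) = #T + 1 ∧ x ∈ insert (σ x) T ∧ σ x ∈ insert (σ x) T ∧
      (∀ g, g ≠ x → g ≠ σ x → ¬ (g ∈ insert (σ x) T ∧ σ g ∈ insert (σ x) T)) ∧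
      ∀ g, g ∈ insert (σ x) T ∨ σ g ∈ insert (σ x) T := by
  refine ⟨card_insert_of_notMem (hT.apply_notMem hx), mem_insert_of_mem hx, mem_insert_self _ _,
    fun g hgx hgσx ⟨hg, hσg⟩ => ?_,
    fun g => (hT.mem_or_apply_mem g).imp mem_insert_of_mem mem_insert_of_mem⟩
  rw [mem_insert, hσ.injective.eq_iff] at hσg
  rw [mem_insert] at hg
  exact hT.apply_notMem (hg.resolve_left hgσx) (hσg.resolve_left hgx)

end IsTransversal

end Transversal

section Complement

variable {n : ℕ}

theorem bar_val (g : Fin (2 * n)) :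
    (bar n g).val = if g.val < n then g.val + n else g.val - n := by
  have hg := g.isLt
  simp only [bar]
  split
  · exact Nat.mod_eq_of_lt (by omega)
  · rw [Nat.mod_eq_sub_mod (by omega), Nat.mod_eq_of_lt (by omega)]
    omega

theorem bar_involutive : Involutive (bar n) := fun g => by
  have hg := g.isLt
  ext
  rw [bar_val, bar_val]
  split_ifs <;> omega

theorem isTransversal_bar :
    IsTransversal (bar n) (univ.filter fun g : Fin (2 * n) => g.val < n) := by
  intro g
  have hg := g.isLt
  simp only [mem_filter, mem_univ, true_and, bar_val]
  split_ifs <;> omega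

theorem IsTransversal.card_of_bar {T : Finset (Fin (2 * n))} (hT : IsTransversal (bar n) T) :
    #T = n := by
  have := hT.two_mul_card bar_involutive
  rw [Fintype.card_fin] at this
  omega

end Complement

section Signs

variable {n : ℕ} {π : Equiv.Perm (Fin (2 * n))} {F : Finset (Fin (2 * n))}

theorem sgn_insert {C : Finset (Fin (2 * n))} {x : Fin (2 * n)} (hx : x ∉ C) (g : Fin (2 * n)) :
    sgn n π F (insert x C) g = (if π x < π g then -1 else 1) * sgn n π F C g := by
  unfold sgn
  rw [filter_insert]
  by_cases h : π x < π g
  · rw [if_pos h, if_pos h, card_insert_of_notMem (fun h' => hx (mem_filter.1 h').1), pow_succ]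
    ring
  · rw [if_neg h, if_neg h, one_mul]

theorem sgn_eq_or_eq_neg (C : Finset (Fin (2 * n))) (g g' : Fin (2 * n)) :
    sgn n π F C g = sgn n π F C g' ∨ sgn n π F C g = -sgn n π F C g' := by
  unfold sgn
  rcases neg_one_pow_eq_or ℤ #(C.filter fun h => π h < π g) with h | h <;>
  rcases neg_one_pow_eq_or ℤ #(C.filter fun h => π h < π g') with h' | h' <;>
  · rw [h, h']
    split_ifs <;> norm_num

theorem ite_lt_eq_ite_mem_Icc_mul {β : Type*} [LinearOrder β] {p a b : β} (ha : p ≠ a)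
    (hb : p ≠ b) :
    (if p < a then -1 else 1 : ℤ) =
      (if p ∈ Set.Icc (min a b) (max a b) then -1 else 1) * (if p < b then -1 else 1) := by
  rcases ha.lt_or_gt with ha | ha <;> rcases hb.lt_or_gt with hb | hb <;>
  · simp [ha, hb, ha.le, hb.le, ha.not_gt, hb.not_gt, ha.not_ge, hb.not_ge]

theorem exists_sgn_insert_eq_neg {D : Finset (Fin (2 * n))} {a b x y : Fin (2 * n)}
    (ha : a ∈ D) (hb : b ∈ D) (hx : x ∉ D) (hy : y ∉ D)
    (hxy : Xor (π x ∈ Set.Icc (min (π a) (π b)) (max (π a) (π b)))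
      (π y ∈ Set.Icc (min (π a) (π b)) (max (π a) (π b)))) :
    ∃ c, (c = x ∨ c = y) ∧ sgn n π F (insert c D) a = -sgn n π F (insert c D) b := by
  suffices ∃ c ∉ D, (c = x ∨ c = y) ∧
      (if π c ∈ Set.Icc (min (π a) (π b)) (max (π a) (π b)) then -1 else 1) * sgn n π F D a =
        -sgn n π F D b by
    obtain ⟨c, hc, hcxy, h⟩ := this
    have hca : π c ≠ π a := π.injective.ne (ne_of_mem_of_not_mem ha hc).symm
    have hcb : π c ≠ π b := π.injective.ne (ne_of_mem_of_not_mem hb hc).symm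
    refine ⟨c, hcxy, ?_⟩
    rw [sgn_insert hc, sgn_insert hc, ite_lt_eq_ite_mem_Icc_mul hca hcb]
    linear_combination (if π c < π b then (-1 : ℤ) else 1) * h
  rcases sgn_eq_or_eq_neg (π := π) (F := F) D a b with h | h <;>
  rcases hxy with ⟨hxI, hyI⟩ | ⟨hyI, hxI⟩
  · exact ⟨x, hx, .inl rfl, by simp [hxI, h]⟩
  · exact ⟨y, hy, .inr rfl, by simp [hyI, h]⟩
  · exact ⟨y, hy, .inr rfl, by simp [hyI, h]⟩
  · exact ⟨x, hx, .inl rfl, by simp [hxI, h]⟩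

end Signs

/-- If the permutation `π` violates the nesting condition, witnessed by `e, f` with
exactly one of `π f, π f̄` in the interval spanned by `π e` and `π ē`, then for any
sign-flip set `F` there is an almost-complementary set `C` of size `n+1` containing
`{e, ē}` and exactly one element of each other complementary pair, on which the
alternating-sign assignment gives `e` and `ē` opposite signs. -/
theorem stmt19 (n : ℕ) (π : Equiv.Perm (Fin (2 * n))) (e f : Fin (2 * n))
    (hviol : Xor'
      (π f ∈ Set.Icc (min (π e) (π (bar n e))) (max (π e) (π (bar n e))))
      (π (bar n f) ∈ Set.Icc (min (π e) (π (bar n e))) (max (π e) (π (bar n e))))) :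
    ∀ F : Finset (Fin (2 * n)), ∃ C : Finset (Fin (2 * n)),
      C.card = n + 1 ∧ e ∈ C ∧ bar n e ∈ C ∧
      (∀ g, g ≠ e → g ≠ bar n e → ¬ (g ∈ C ∧ bar n g ∈ C)) ∧
      (∀ g, g ∈ C ∨ bar n g ∈ C) ∧
      sgn n π F C e = - sgn n π F C (bar n e) := by
  intro F
  have hfe : f ≠ e := by
    rintro rfl
    rcases hviol with ⟨-, h⟩ | ⟨-, h⟩ <;> exact h (by simp)
  have hfe' : f ≠ bar n e := by
    rintro rfl
    rcases hviol with ⟨-, h⟩ | ⟨-, h⟩ <;> exact h (by simp [bar_involutive e])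
  obtain ⟨T, hT, heT, hfT⟩ := isTransversal_bar.exists_mem_mem bar_involutive hfe'
  set T' := insert (bar n f) (T.erase f)
  have hT' : IsTransversal (bar n) T' := by
    simpa only [bar_involutive f] using hT.insert_erase bar_involutive (bar n f)
  have heT' : e ∈ T' := mem_insert_of_mem (mem_erase.2 ⟨hfe.symm, heT⟩)
  set D := insert (bar n e) (T.erase f)
  have hC : insert f D = insert (bar n e) T := by rw [insert_comm, insert_erase hfT]
  have hC' : insert (bar n f) D = insert (bar n e) T' := insert_comm _ _ _
  obtain ⟨S, hS, heS, hsgn⟩ : ∃ S, IsTransversal (bar n) S ∧ e ∈ S ∧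
      sgn n π F (insert (bar n e) S) e = -sgn n π F (insert (bar n e) S) (bar n e) := by
    have hfD : f ∉ D := by simp [D, hfe']
    have hbfD : bar n f ∉ D := by
      simp [D, bar_involutive.injective.ne hfe, hT.apply_notMem hfT]
    obtain ⟨c, rfl | rfl, hc⟩ := exists_sgn_insert_eq_neg (F := F) (mem_insert_of_mem
      (mem_erase.2 ⟨hfe.symm, heT⟩)) (mem_insert_self _ _) hfD hbfD hviol
    · exact ⟨T, hT, heT, hC ▸ hc⟩
    · exact ⟨T', hT', heT', hC' ▸ hc⟩
  obtain ⟨hcard, he, hbe, hpair, hcover⟩ := hS.almostComplementary_insert_apply bar_involutive heS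
  exact ⟨_, hcard.trans (congrArg (· + 1) hS.card_of_bar), he, hbe, hpair, hcover, hsgn⟩
end
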